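/- arXiv:2106.00536 — 7 statements merged into one kernel-verified Lean document; each statement's English description precedes it below -/
import Mathlib

section
/- Under the generalized selection model, the function z ↦ E[Y₀] + ∫₀^{P_D(z)} m(u) du is a conditional-mean version of Y given Z; that is, for every Borel set B ⊆ ℝ, E[Y·1{Z ∈ B}] = ∫_B ( E[Y₀] + ∫₀^{P_D(z)} m(u) du ) dν(z). (First step in the proof of Proposition 1.) -/
open MeasureTheory ProbabilityTheory

/-!
Write `W = (Y₀, Y₁, U)`. The realized outcome times `1{Z ∈ B}` is a fixed function `F(Z, W)`,
and since `Z ⟂ W` the joint law of `(Z, W)` is `ν ⊗ law(W)`, so by Fubini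
`E[Y·1{Z ∈ B}] = ∫_B E[F(z, W)] dν(z)`. For fixed `z` the inner expectation is
`E[Y₀] + E[(Y₁ - Y₀)·1{U ≤ P_D(z)}]`, and the defining property of `m` applied to
`A = (-∞, P_D(z)]` identifies the second term with `∫₀^{P_D(z)} m`.
-/

theorem ProbabilityTheory.IndepFun.integral_comp_eq_integral_integral
    {Ω α β E : Type*} [MeasurableSpace Ω] [MeasurableSpace α] [MeasurableSpace β]
    [NormedAddCommGroup E] [NormedSpace ℝ E] [CompleteSpace E]
    {P : Measure Ω} [IsFiniteMeasure P] {X : Ω → α} {W : Ω → β}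
    (h : IndepFun X W P) (hX : AEMeasurable X P) (hW : AEMeasurable W P)
    {F : α × β → E} (hF : Integrable F ((P.map X).prod (P.map W))) :
    ∫ ω, F (X ω, W ω) ∂P = ∫ x, ∫ w, F (x, w) ∂(P.map W) ∂(P.map X) := by
  have hmap := h.map_prod_eq_prod_map_map hX hW
  rw [← integral_prod F hF, ← hmap,
    integral_map (hX.prodMk hW) (hmap ▸ hF.aestronglyMeasurable)]

theorem norm_indicator_one_le {α : Type*} (s : Set α) (a : α) :
    ‖s.indicator (1 : α → ℝ) a‖ ≤ 1 :=
  (norm_indicator_le_norm_self _ _).trans_eq norm_one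

theorem setIntegral_Iic_inter_Icc_eq_intervalIntegral (m : ℝ → ℝ) {p : ℝ}
    (hp : p ∈ Set.Icc (0:ℝ) 1) :
    ∫ u in Set.Iic p ∩ Set.Icc 0 1, m u = ∫ u in (0:ℝ)..p, m u := by
  have hset : Set.Iic p ∩ Set.Icc (0:ℝ) 1 = Set.Icc 0 p := by
    ext u
    simp only [Set.mem_inter_iff, Set.mem_Iic, Set.mem_Icc]
    exact ⟨fun ⟨hup, hu0, _⟩ => ⟨hu0, hup⟩, fun ⟨hu0, hup⟩ => ⟨hup, hu0, hup.trans hp.2⟩⟩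
  rw [hset, intervalIntegral.integral_of_le hp.1, integral_Icc_eq_integral_Ioc]

-- `w = (y₀, y₁, u)`: both potential outcomes and the latent selection variable.
noncomputable def selectedOutcome (PD : ℝ → ℝ) (z : ℝ) (w : ℝ × ℝ × ℝ) : ℝ :=
  w.1 + (w.2.1 - w.1) * (Set.Iic (PD z)).indicator 1 w.2.2

theorem measurable_selectedOutcome {PD : ℝ → ℝ} (hPD : Measurable PD) :
    Measurable fun p : ℝ × (ℝ × ℝ × ℝ) => selectedOutcome PD p.1 p.2 := by
  have hsel : MeasurableSet {p : ℝ × (ℝ × ℝ × ℝ) | p.2.2.2 ≤ PD p.1} :=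
    measurableSet_le measurable_snd.snd.snd (hPD.comp measurable_fst)
  simp only [selectedOutcome, Set.indicator_apply, Set.mem_Iic, Pi.one_apply]
  exact measurable_snd.fst.add ((measurable_snd.snd.fst.sub measurable_snd.fst).mul
    (Measurable.ite hsel measurable_const measurable_const))

theorem abs_selectedOutcome_le (PD : ℝ → ℝ) (z : ℝ) (w : ℝ × ℝ × ℝ) :
    |selectedOutcome PD z w| ≤ |w.1| + |w.2.1 - w.1| := by
  set d := (Set.Iic (PD z)).indicator (1 : ℝ → ℝ) w.2.2
  have hd : |d| ≤ 1 := norm_indicator_one_le _ _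
  calc |w.1 + (w.2.1 - w.1) * d| ≤ |w.1| + |w.2.1 - w.1| * |d| := by
        rw [← abs_mul]; exact abs_add_le _ _
    _ ≤ |w.1| + |w.2.1 - w.1| := by gcongr; exact mul_le_of_le_one_right (abs_nonneg _) hd

section LatentOutcomes

variable {Ω : Type*} [MeasurableSpace Ω] {P : Measure Ω} {Y0 Y1 U : Ω → ℝ} {PD : ℝ → ℝ}

theorem integrable_selectedOutcome_mul_indicator [IsFiniteMeasure P]
    (ν : Measure ℝ) [IsFiniteMeasure ν]
    (hPD : Measurable PD) (hY0 : Integrable Y0 P) (hY1 : Integrable Y1 P)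
    (hU : AEMeasurable U P) {B : Set ℝ} (hB : MeasurableSet B) :
    Integrable (fun p : ℝ × (ℝ × ℝ × ℝ) => selectedOutcome PD p.1 p.2 * B.indicator 1 p.1)
      (ν.prod (P.map fun ω => (Y0 ω, Y1 ω, U ω))) := by
  have hbound : Integrable (fun w : ℝ × ℝ × ℝ => |w.1| + |w.2.1 - w.1|)
      (P.map fun ω => (Y0 ω, Y1 ω, U ω)) := by
    rw [integrable_map_measure (by fun_prop)
      (hY0.aemeasurable.prodMk (hY1.aemeasurable.prodMk hU))]
    exact hY0.abs.add (hY1.sub hY0).abs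
  refine (hbound.comp_snd ν).mono' ((measurable_selectedOutcome hPD).mul
    ((measurable_const.indicator hB).comp measurable_fst)).aestronglyMeasurable
    (ae_of_all _ fun p => ?_)
  calc ‖selectedOutcome PD p.1 p.2 * B.indicator 1 p.1‖
      ≤ ‖selectedOutcome PD p.1 p.2‖ * 1 := by
        rw [norm_mul]; gcongr; exact norm_indicator_one_le _ _
    _ ≤ |p.2.1| + |p.2.2.1 - p.2.1| := by
        rw [mul_one, Real.norm_eq_abs]; exact abs_selectedOutcome_le PD p.1 p.2

theorem integral_map_selectedOutcome (hPD : Measurable PD) (hY0 : Integrable Y0 P)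
    (hY1 : Integrable Y1 P) (hU : AEMeasurable U P) {m : ℝ → ℝ}
    (hm : ∀ A : Set ℝ, MeasurableSet A →
      ∫ u in A ∩ Set.Icc (0:ℝ) 1, m u = ∫ ω, (Y1 ω - Y0 ω) * A.indicator 1 (U ω) ∂P)
    {z : ℝ} (hz : PD z ∈ Set.Icc (0:ℝ) 1) :
    ∫ w, selectedOutcome PD z w ∂(P.map fun ω => (Y0 ω, Y1 ω, U ω))
      = ∫ ω, Y0 ω ∂P + ∫ u in (0:ℝ)..(PD z), m u := by
  have hsel : Integrable (fun ω => (Y1 ω - Y0 ω) * (Set.Iic (PD z)).indicator 1 (U ω)) P :=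
    (hY1.sub hY0).mul_bdd
      ((measurable_const.indicator measurableSet_Iic).comp_aemeasurable hU).aestronglyMeasurable
      (ae_of_all _ fun _ => norm_indicator_one_le _ _)
  have hmeas : Measurable (selectedOutcome PD z) :=
    (measurable_selectedOutcome hPD).comp measurable_prodMk_left
  rw [integral_map (hY0.aemeasurable.prodMk (hY1.aemeasurable.prodMk hU))
      hmeas.aestronglyMeasurable,
    ← setIntegral_Iic_inter_Icc_eq_intervalIntegral m hz, hm _ measurableSet_Iic]
  exact integral_add hY0 hsel

end LatentOutcomes

theorem stmt_0_general
    {Ω : Type*} [MeasurableSpace Ω] (P : Measure Ω) [IsProbabilityMeasure P]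
    (Z U Y0 Y1 : Ω → ℝ)
    (hZm : Measurable Z) (hUm : Measurable U)
    (hindep : IndepFun Z (fun ω => (Y0 ω, Y1 ω, U ω)) P)
    (hY0int : Integrable Y0 P) (hY1int : Integrable Y1 P)
    (PD : ℝ → ℝ) (hPDm : Measurable PD) (hPD01 : ∀ z, PD z ∈ Set.Icc (0:ℝ) 1)
    (D : Ω → ℝ) (hD : ∀ ω, D ω = if U ω ≤ PD (Z ω) then 1 else 0)
    (Y : Ω → ℝ) (hY : ∀ ω, Y ω = D ω * Y1 ω + (1 - D ω) * Y0 ω)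
    (m : ℝ → ℝ)
    (hmcond : ∀ A : Set ℝ, MeasurableSet A →
      ∫ u in A ∩ Set.Icc (0:ℝ) 1, m u
        = ∫ ω, (Y1 ω - Y0 ω) * A.indicator 1 (U ω) ∂P) :
    ∀ B : Set ℝ, MeasurableSet B →
      ∫ ω, Y ω * B.indicator 1 (Z ω) ∂P
        = ∫ z in B, ((∫ ω, Y0 ω ∂P) + ∫ u in (0:ℝ)..(PD z), m u) ∂(Measure.map Z P) := by
  intro B hB
  have hY_eq (ω : Ω) : Y ω = selectedOutcome PD (Z ω) (Y0 ω, Y1 ω, U ω) := by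
    by_cases hsel : U ω ≤ PD (Z ω) <;> simp [hY, hD, selectedOutcome, hsel]
  calc ∫ ω, Y ω * B.indicator 1 (Z ω) ∂P
      = ∫ ω, selectedOutcome PD (Z ω) (Y0 ω, Y1 ω, U ω) * B.indicator 1 (Z ω) ∂P := by
        simp only [hY_eq]
    _ = ∫ z, ∫ w, selectedOutcome PD z w * B.indicator 1 z
          ∂(P.map fun ω => (Y0 ω, Y1 ω, U ω)) ∂(P.map Z) :=
        hindep.integral_comp_eq_integral_integral
          (F := fun p => selectedOutcome PD p.1 p.2 * B.indicator 1 p.1) hZm.aemeasurable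
          (hY0int.aemeasurable.prodMk (hY1int.aemeasurable.prodMk hUm.aemeasurable))
          (integrable_selectedOutcome_mul_indicator _ hPDm hY0int hY1int hUm.aemeasurable hB)
    _ = ∫ z, ((∫ ω, Y0 ω ∂P) + ∫ u in (0:ℝ)..(PD z), m u) * B.indicator 1 z ∂(P.map Z) := by
        simp only [integral_mul_const,
          integral_map_selectedOutcome hPDm hY0int hY1int hUm.aemeasurable hmcond (hPD01 _)]
    _ = _ := by
        rw [← integral_indicator hB]
        congr 1 with z
        by_cases hz : z ∈ B <;> simp [hz]

/-- Under the generalized selection model, the function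
`z ↦ E[Y₀] + ∫₀^{P_D(z)} m(u) du` is a conditional-mean version of `Y` given `Z`:
for every Borel set `B ⊆ ℝ`,
`E[Y·1{Z ∈ B}] = ∫_B (E[Y₀] + ∫₀^{P_D(z)} m(u) du) dν(z)`, where `ν` is the law of `Z`. -/
theorem stmt_0
    {Ω : Type*} [MeasurableSpace Ω] (P : Measure Ω) [IsProbabilityMeasure P]
    (Z U Y0 Y1 : Ω → ℝ)
    (hZm : Measurable Z) (hUm : Measurable U) (hY0m : Measurable Y0) (hY1m : Measurable Y1)
    (hindep : IndepFun Z (fun ω => (Y0 ω, Y1 ω, U ω)) P)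
    (hUnif : Measure.map U P = volume.restrict (Set.Icc (0:ℝ) 1))
    (hY0int : Integrable Y0 P) (hY1int : Integrable Y1 P)
    (PD : ℝ → ℝ) (hPDm : Measurable PD) (hPD01 : ∀ z, PD z ∈ Set.Icc (0:ℝ) 1)
    (D : Ω → ℝ) (hD : ∀ ω, D ω = if U ω ≤ PD (Z ω) then 1 else 0)
    (Y : Ω → ℝ) (hY : ∀ ω, Y ω = D ω * Y1 ω + (1 - D ω) * Y0 ω)
    (m : ℝ → ℝ) (hmm : Measurable m) (hmint : IntegrableOn m (Set.Icc 0 1) volume)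
    (hmcond : ∀ A : Set ℝ, MeasurableSet A →
      ∫ u in A ∩ Set.Icc (0:ℝ) 1, m u
        = ∫ ω, (Y1 ω - Y0 ω) * A.indicator 1 (U ω) ∂P) :
    ∀ B : Set ℝ, MeasurableSet B →
      ∫ ω, Y ω * B.indicator 1 (Z ω) ∂P
        = ∫ z in B, ((∫ ω, Y0 ω ∂P) + ∫ u in (0:ℝ)..(PD z), m u) ∂(Measure.map Z P) :=
  stmt_0_general P Z U Y0 Y1 hZm hUm hindep hY0int hY1int PD hPDm hPD01 D hD Y hY m hmcond
end

section
/- Proposition 2, part 2, sup-norm case. Let 𝒵 ⊆ ℝ, c ∈ [1, ∞), and let f, θ, r : 𝒵 → ℝ satisfy, for every z ∈ 𝒵, r(z) ∈ [1/c, c] and f(z) = r(z)·θ(z). Then for every θ̃ ∈ Θ₁, sup_{z ∈ 𝒵} |θ(z) − θ̃(z)| ≤ ((c² − 1)/c) · sup_{z ∈ 𝒵} |f(z)| (as an inequality in [0, ∞]). -/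
/-!
Since `r(z) ∈ [1/c, c]`, the true value `θ(z) = r(z)⁻¹ f(z)` lies in the same interval with
endpoints `f(z)/c` and `c f(z)` that `Θ₁` prescribes for `θ̃(z)`. Two points of that interval are at
distance at most its length `|c f(z) - f(z)/c| = ((c² - 1)/c) |f(z)|`; take suprema.
-/

open Set
open scoped Interval

/-- Membership of `θ̃` in the uniform outer set `Θ₁` determined by `f` and `c` on `𝒵`. -/
def MemTheta1 (𝒵 : Set ℝ) (f : ℝ → ℝ) (c : ℝ) (θt : ℝ → ℝ) : Prop :=
  ∀ z ∈ 𝒵,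
    (0 ≤ f z → θt z ∈ Set.Icc (f z / c) (c * f z)) ∧
    (f z < 0 → θt z ∈ Set.Icc (c * f z) (f z / c))

lemma inv_mem_Icc_inv_self_of_mem {c r : ℝ} (hc : 0 < c) (hr : r ∈ Icc c⁻¹ c) :
    r⁻¹ ∈ Icc c⁻¹ c := by
  have hr0 : 0 < r := (inv_pos.2 hc).trans_le hr.1
  exact ⟨inv_anti₀ hr0 hr.2, inv_le_of_inv_le₀ hc hr.1⟩

lemma mem_uIcc_div_mul_of_eq_mul {c r f θ : ℝ} (hc : 0 < c) (hr : r ∈ Icc (1 / c) c)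
    (hf : f = r * θ) : θ ∈ [[f / c, c * f]] := by
  rw [one_div] at hr
  have hr0 : r ≠ 0 := ((inv_pos.2 hc).trans_le hr.1).ne'
  have hθ : θ = r⁻¹ * f := by rw [hf, inv_mul_cancel_left₀ hr0]
  rw [hθ, div_eq_inv_mul, ← image_mul_const_uIcc]
  exact mem_image_of_mem _ (Icc_subset_uIcc (inv_mem_Icc_inv_self_of_mem hc hr))

lemma MemTheta1.mem_uIcc {𝒵 : Set ℝ} {f : ℝ → ℝ} {c : ℝ} {θt : ℝ → ℝ}
    (hθt : MemTheta1 𝒵 f c θt) {z : ℝ} (hz : z ∈ 𝒵) : θt z ∈ [[f z / c, c * f z]] := by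
  rcases le_or_gt 0 (f z) with hfz | hfz
  · exact Icc_subset_uIcc ((hθt z hz).1 hfz)
  · exact Icc_subset_uIcc' ((hθt z hz).2 hfz)

lemma abs_sub_le_of_mem_uIcc_div_mul {c f x y : ℝ} (hc : 1 ≤ c) (hx : x ∈ [[f / c, c * f]])
    (hy : y ∈ [[f / c, c * f]]) : |x - y| ≤ (c ^ 2 - 1) / c * |f| := by
  have hc0 : 0 < c := one_pos.trans_le hc
  have hlength : c * f - f / c = (c ^ 2 - 1) / c * f := by field_simp
  calc |x - y| ≤ |c * f - f / c| := abs_sub_le_of_uIcc_subset_uIcc (uIcc_subset_uIcc hy hx)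
    _ = (c ^ 2 - 1) / c * |f| := by
      rw [hlength, abs_mul, abs_of_nonneg (div_nonneg (by nlinarith) hc0.le)]

lemma biSup_ofReal_le_ofReal_mul_biSup {α : Type*} {s : Set α} {g h : α → ℝ} {K : ℝ}
    (hK : 0 ≤ K) (hgh : ∀ z ∈ s, g z ≤ K * h z) :
    ⨆ z ∈ s, ENNReal.ofReal (g z) ≤ ENNReal.ofReal K * ⨆ z ∈ s, ENNReal.ofReal (h z) := by
  refine iSup₂_le fun z hz => ?_
  calc ENNReal.ofReal (g z) ≤ ENNReal.ofReal (K * h z) := ENNReal.ofReal_le_ofReal (hgh z hz)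
    _ = ENNReal.ofReal K * ENNReal.ofReal (h z) := ENNReal.ofReal_mul hK
    _ ≤ ENNReal.ofReal K * ⨆ z ∈ s, ENNReal.ofReal (h z) :=
      mul_le_mul_right (le_iSup₂ (f := fun z _ => ENNReal.ofReal (h z)) z hz) _

/-- **Proposition 2, part 2, sup-norm case.**
If `r(z) ∈ [1/c, c]` and `f(z) = r(z)·θ(z)` on `𝒵`, with `c ≥ 1`, then for every `θ̃ ∈ Θ₁`,
`sup_{z ∈ 𝒵} |θ(z) − θ̃(z)| ≤ ((c² − 1)/c) · sup_{z ∈ 𝒵} |f(z)|` (inequality in `[0, ∞]`). -/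
theorem stmt_5
    (𝒵 : Set ℝ) (c : ℝ) (hc : 1 ≤ c) (f θ r : ℝ → ℝ)
    (hr : ∀ z ∈ 𝒵, r z ∈ Set.Icc (1 / c) c)
    (hf : ∀ z ∈ 𝒵, f z = r z * θ z) :
    ∀ θt : ℝ → ℝ, MemTheta1 𝒵 f c θt →
      (⨆ z ∈ 𝒵, ENNReal.ofReal |θ z - θt z|)
        ≤ ENNReal.ofReal ((c ^ 2 - 1) / c) * ⨆ z ∈ 𝒵, ENNReal.ofReal |f z| := by
  intro θt hθt
  have hc0 : 0 < c := one_pos.trans_le hc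
  refine biSup_ofReal_le_ofReal_mul_biSup (div_nonneg (by nlinarith) hc0.le) fun z hz => ?_
  exact abs_sub_le_of_mem_uIcc_div_mul hc
    (mem_uIcc_div_mul_of_eq_mul hc0 (hr z hz) (hf z hz)) (hθt.mem_uIcc hz)
end

section
/- Proposition 3 (sharp identified set for the MTE function, binary outcome). Let 𝒵 ⊆ ℝ be an open interval with a point z₀ ∈ 𝒵, let ν be a Borel probability measure on ℝ with ν(𝒵) = 1, let c ∈ [1, ∞), let P_T : 𝒵 → [0,1] be continuously differentiable with P_T′(z) ≠ 0 for all z, and let f : 𝒵 → ℝ be continuous. Suppose a : 𝒵 → [1/c, c] is continuous and b̃ ∈ ℝ are such that P̃(z) := b̃ + ∫_{z₀}^{z} a(t)·P_T′(t) dt defines an injective map of 𝒵 into [0,1], and that θ̃(z) := f(z)/a(z) satisfies −1 ≤ θ̃(z) ≤ 1 for all z ∈ 𝒵. Then there exist a probability space carrying random variables Z, Ũ, Ỹ₀, Ỹ₁ and a Borel function m̃ : [0,1] → [−1,1] such that: (i) Z has law ν; (ii) Ũ is uniformly distributed on [0,1]; (iii) Z is independent of the triple (Ỹ₀, Ỹ₁,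 Ũ); (iv) Ỹ₀ and Ỹ₁ take values in {0,1}; (v) m̃ is a conditional-mean version of Ỹ₁ − Ỹ₀ given Ũ, i.e. ∫_A m̃(u) du = E[(Ỹ₁ − Ỹ₀)·1{Ũ ∈ A}] for every Borel A ⊆ [0,1]; (vi) m̃(P̃(z)) = θ̃(z) for every z ∈ 𝒵; and (vii) the function z ↦ E[Ỹ₀] + ∫₀^{P̃(z)} m̃(u) du is differentiable on 𝒵 with derivative f(z)·P_T′(z) at every z ∈ 𝒵. -/
/-!
`P̃` has the continuous, nowhere vanishing derivative `a · P_T′`, so by the inverse function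
theorem it maps `𝒵` homeomorphically onto an open set, on which `m̃ := θ̃ ∘ P̃⁻¹` is continuous;
extended by zero, `m̃` is Borel and takes values in `[-1, 1]`. Take `Z ~ ν` independent of two
independent uniforms `Ũ, V` and put `Ỹ₁ = 1{V ≤ m̃(Ũ)⁺}`, `Ỹ₀ = 1{V ≤ m̃(Ũ)⁻}`: given `Ũ = u`,
`Ỹ₁ − Ỹ₀` has mean `m̃(u)⁺ − m̃(u)⁻ = m̃(u)`. By the fundamental theorem of calculus and the chain
rule, the derivative in (vii) is `m̃(P̃ z) · a(z) P_T′(z) = θ̃(z) a(z) P_T′(z) = f(z) P_T′(z)`.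
-/

open MeasureTheory ProbabilityTheory Set Filter Topology Function

section CompInvFunOn

variable {F g : ℝ → ℝ} {s : Set ℝ}

/-- The paper's `m̃ = θ̃ ∘ P̃⁻¹`, for `g = θ̃`, `F = P̃` and `s = 𝒵`. -/
noncomputable def compInvFunOn (g F : ℝ → ℝ) (s : Set ℝ) : ℝ → ℝ :=
  (F '' s).indicator (g ∘ invFunOn F s)

theorem compInvFunOn_apply_image (hinj : InjOn F s) {x : ℝ} (hx : x ∈ s) :
    compInvFunOn g F s (F x) = g x := by
  rw [compInvFunOn, indicator_of_mem (mem_image_of_mem F hx), comp_apply,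
    hinj.leftInvOn_invFunOn hx]

theorem compInvFunOn_mem {T : Set ℝ} (h0 : (0 : ℝ) ∈ T) (hg : MapsTo g s T) (u : ℝ) :
    compInvFunOn g F s u ∈ T := by
  by_cases hu : u ∈ F '' s
  · rw [compInvFunOn, indicator_of_mem hu]
    exact hg (invFunOn_mem hu)
  · rwa [compInvFunOn, indicator_of_notMem hu]

theorem image_mem_nhds_of_hasStrictDerivAt {F' x : ℝ} (hs : s ∈ 𝓝 x)
    (hF : HasStrictDerivAt F F' x) (hF' : F' ≠ 0) : F '' s ∈ 𝓝 (F x) :=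
  hF.map_nhds_eq hF' ▸ image_mem_map hs

/-- On the injectivity domain, `invFunOn` agrees with the local inverse of the inverse function
theorem, which is continuous. -/
theorem continuousAt_invFunOn_of_hasStrictDerivAt {F' x : ℝ} (hs : s ∈ 𝓝 x) (hinj : InjOn F s)
    (hF : HasStrictDerivAt F F' x) (hF' : F' ≠ 0) : ContinuousAt (invFunOn F s) (F x) := by
  have hloc := (hF.to_localInverse hF').hasDerivAt.continuousAt
  have hmem : ∀ᶠ y in 𝓝 (F x), hF.localInverse F F' x hF' y ∈ s :=
    hloc.preimage_mem_nhds (by rwa [(hF.eventually_left_inverse hF').self_of_nhds])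
  refine hloc.congr ?_
  filter_upwards [hmem, hF.eventually_right_inverse hF'] with y hys hFy
  have hy : y ∈ F '' s := ⟨_, hys, hFy⟩
  exact hinj hys (invFunOn_mem hy) (hFy.trans (invFunOn_eq hy).symm)

theorem continuousAt_comp_invFunOn {F' x : ℝ} (hs : s ∈ 𝓝 x) (hinj : InjOn F s)
    (hF : HasStrictDerivAt F F' x) (hF' : F' ≠ 0) (hg : ContinuousAt g x) :
    ContinuousAt (g ∘ invFunOn F s) (F x) :=
  hg.comp_of_eq (continuousAt_invFunOn_of_hasStrictDerivAt hs hinj hF hF')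
    (hinj.leftInvOn_invFunOn (mem_of_mem_nhds hs))

theorem continuousAt_compInvFunOn {F' x : ℝ} (hs : s ∈ 𝓝 x) (hinj : InjOn F s)
    (hF : HasStrictDerivAt F F' x) (hF' : F' ≠ 0) (hg : ContinuousAt g x) :
    ContinuousAt (compInvFunOn g F s) (F x) := by
  refine (continuousAt_comp_invFunOn hs hinj hF hF' hg).congr ?_
  filter_upwards [image_mem_nhds_of_hasStrictDerivAt hs hF hF'] with y hy
  rw [compInvFunOn, indicator_of_mem hy]

theorem measurable_compInvFunOn {F' : ℝ → ℝ} (hs : IsOpen s) (hinj : InjOn F s)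
    (hF : ∀ x ∈ s, HasStrictDerivAt F (F' x) x) (hF' : ∀ x ∈ s, F' x ≠ 0)
    (hg : ContinuousOn g s) : Measurable (compInvFunOn g F s) := by
  have hopen : IsOpen (F '' s) := isOpen_iff_mem_nhds.2 <| by
    rintro _ ⟨x, hx, rfl⟩
    exact image_mem_nhds_of_hasStrictDerivAt (hs.mem_nhds hx) (hF x hx) (hF' x hx)
  have hcont : ContinuousOn (g ∘ invFunOn F s) (F '' s) := by
    rintro _ ⟨x, hx, rfl⟩
    exact (continuousAt_comp_invFunOn (hs.mem_nhds hx) hinj (hF x hx) (hF' x hx)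
      (hg.continuousAt (hs.mem_nhds hx))).continuousWithinAt
  classical
  rw [compInvFunOn, ← piecewise_eq_indicator]
  exact hcont.measurable_piecewise continuousOn_const hopen.measurableSet

end CompInvFunOn

theorem hasStrictDerivAt_integral_of_continuousOn {φ : ℝ → ℝ} {s : Set ℝ} (hs : IsOpen s)
    (hs' : s.OrdConnected) (hφ : ContinuousOn φ s) {x₀ x : ℝ} (hx₀ : x₀ ∈ s) (hx : x ∈ s) :
    HasStrictDerivAt (fun x => ∫ t in x₀..x, φ t) (φ x) x :=
  intervalIntegral.integral_hasStrictDerivAt_right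
    ((hφ.mono (hs'.uIcc_subset hx₀ hx)).intervalIntegrable)
    (hφ.stronglyMeasurableAtFilter hs x hx) (hφ.continuousAt (hs.mem_nhds hx))

theorem hasDerivAt_integral_comp_of_continuousAt {m F : ℝ → ℝ} {C F' x : ℝ} (hm : Measurable m)
    (hC : ∀ u, |m u| ≤ C) (hmF : ContinuousAt m (F x)) (hF : HasDerivAt F F' x) (a : ℝ) :
    HasDerivAt (fun z => ∫ u in a..F z, m u) (m (F x) * F') x := by
  have hint : IntervalIntegrable m volume a (F x) := intervalIntegrable_iff.2 <|
    IntegrableOn.of_bound measure_Ioc_lt_top hm.aestronglyMeasurable C (ae_of_all _ hC)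
  exact (intervalIntegral.integral_hasDerivAt_right hint
    hm.stronglyMeasurable.stronglyMeasurableAtFilter hmF).comp x hF

noncomputable abbrev uniform01 : Measure ℝ := volume.restrict (Icc 0 1)

instance : IsProbabilityMeasure uniform01 := ⟨by simp [Real.volume_Icc]⟩

theorem integral_ite_le_uniform01 {t : ℝ} (ht : t ∈ Icc (0 : ℝ) 1) :
    ∫ v, (if v ≤ t then (1 : ℝ) else 0) ∂uniform01 = t := by
  have hind : (fun v => if v ≤ t then (1 : ℝ) else 0) = (Iic t).indicator 1 := by
    ext v; simp [indicator_apply]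
  have hset : Iic t ∩ Icc 0 1 = Icc 0 t := by
    ext v
    simp only [mem_inter_iff, mem_Iic, mem_Icc]
    grind
  rw [hind, integral_indicator_one measurableSet_Iic, measureReal_restrict_apply measurableSet_Iic,
    hset, Real.volume_real_Icc_of_le ht.1, sub_zero]

/-- Evaluated at `(Ũ, V)` with `V` an independent uniform, `(outcome (-m), outcome m)` is the pair
`(Ỹ₀, Ỹ₁)`: given `Ũ = u` their means are `m(u)⁻` and `m(u)⁺`. -/
noncomputable def outcome (m : ℝ → ℝ) (p : ℝ × ℝ) : ℝ := if p.2 ≤ max (m p.1) 0 then 1 else 0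

theorem outcome_eq_zero_or_one (m : ℝ → ℝ) (p : ℝ × ℝ) : outcome m p = 0 ∨ outcome m p = 1 := by
  unfold outcome; split_ifs <;> simp

theorem measurable_outcome {m : ℝ → ℝ} (hm : Measurable m) : Measurable (outcome m) :=
  Measurable.ite (measurableSet_le measurable_snd ((hm.comp measurable_fst).max measurable_const))
    measurable_const measurable_const

theorem integral_outcome_sub_outcome_neg {m : ℝ → ℝ} (hm : ∀ u, m u ∈ Icc (-1 : ℝ) 1) (u : ℝ) :
    ∫ v, (outcome m (u, v) - outcome (-m) (u, v)) ∂uniform01 = m u := by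
  have hint (t : ℝ) : Integrable (fun v => if v ≤ t then (1 : ℝ) else 0) uniform01 :=
    .of_bound (measurable_const.ite measurableSet_Iic measurable_const).aestronglyMeasurable 1
      (ae_of_all _ fun v => by split_ifs <;> simp)
  simp only [outcome, Pi.neg_apply]
  rw [integral_sub (hint _) (hint _),
    integral_ite_le_uniform01 ⟨le_max_right _ _, max_le (hm u).2 zero_le_one⟩,
    integral_ite_le_uniform01 ⟨le_max_right _ _, max_le (by linarith [(hm u).1]) zero_le_one⟩,
    max_zero_sub_max_neg_zero_eq_self]

theorem integral_outcome_sub_outcome_neg_mul_indicator {m : ℝ → ℝ} (hm : Measurable m)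
    (hm1 : ∀ u, m u ∈ Icc (-1 : ℝ) 1) {A : Set ℝ} (hA : MeasurableSet A) :
    ∫ p, (outcome m p - outcome (-m) p) * A.indicator 1 p.1 ∂(uniform01.prod uniform01)
      = ∫ u in A ∩ Icc 0 1, m u := by
  have hmeas : Measurable fun p : ℝ × ℝ => (outcome m p - outcome (-m) p) * A.indicator 1 p.1 :=
    ((measurable_outcome hm).sub (measurable_outcome hm.neg)).mul
      ((measurable_one.indicator hA).comp measurable_fst)
  have hbdd (p : ℝ × ℝ) : ‖(outcome m p - outcome (-m) p) * A.indicator 1 p.1‖ ≤ 1 := by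
    rcases outcome_eq_zero_or_one m p with h1 | h1 <;>
      rcases outcome_eq_zero_or_one (-m) p with h0 | h0 <;>
      by_cases hp : p.1 ∈ A <;> simp [h1, h0, hp]
  rw [integral_prod _ (Integrable.of_bound hmeas.aestronglyMeasurable 1 (ae_of_all _ hbdd))]
  simp_rw [integral_mul_const, integral_outcome_sub_outcome_neg hm1]
  rw [← Measure.restrict_restrict hA, ← integral_indicator hA]
  congr with u
  by_cases hu : u ∈ A <;> simp [hu]

theorem stmt_8_general
    (𝒵 : Set ℝ) (h𝒵open : IsOpen 𝒵) (h𝒵conn : 𝒵.OrdConnected)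
    (z₀ : ℝ) (hz₀ : z₀ ∈ 𝒵)
    (ν : Measure ℝ) [IsProbabilityMeasure ν]
    (c : ℝ) (hc : 1 ≤ c)
    (PT' f a : ℝ → ℝ)
    (hPT'cont : ContinuousOn PT' 𝒵)
    (hPT'ne : ∀ z ∈ 𝒵, PT' z ≠ 0)
    (hfcont : ContinuousOn f 𝒵)
    (hacont : ContinuousOn a 𝒵)
    (harange : ∀ z ∈ 𝒵, a z ∈ Set.Icc (1 / c) c)
    (btil : ℝ)
    (Ptil : ℝ → ℝ) (hPtil : ∀ z, Ptil z = btil + ∫ t in z₀..z, a t * PT' t)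
    (hPtilinj : Set.InjOn Ptil 𝒵)
    (θtil : ℝ → ℝ) (hθtil : ∀ z, θtil z = f z / a z)
    (hθtil_bdd : ∀ z ∈ 𝒵, θtil z ∈ Set.Icc (-1 : ℝ) 1) :
    ∃ (Ω : Type) (_ : MeasurableSpace Ω) (P : Measure Ω) (_ : IsProbabilityMeasure P)
      (Z U Y0 Y1 : Ω → ℝ) (mtil : ℝ → ℝ),
      Measurable Z ∧ Measurable U ∧ Measurable Y0 ∧ Measurable Y1 ∧ Measurable mtil ∧
      (∀ u ∈ Set.Icc (0:ℝ) 1, mtil u ∈ Set.Icc (-1 : ℝ) 1) ∧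
      -- (i) Z has law ν
      Measure.map Z P = ν ∧
      -- (ii) Ũ is uniformly distributed on [0,1]
      Measure.map U P = volume.restrict (Set.Icc (0:ℝ) 1) ∧
      -- (iii) Z is independent of (Ỹ₀, Ỹ₁, Ũ)
      IndepFun Z (fun ω => (Y0 ω, Y1 ω, U ω)) P ∧
      -- (iv) Ỹ₀ and Ỹ₁ take values in {0,1}
      (∀ ω, Y0 ω = 0 ∨ Y0 ω = 1) ∧ (∀ ω, Y1 ω = 0 ∨ Y1 ω = 1) ∧
      -- (v) m̃ is a conditional-mean version of Ỹ₁ − Ỹ₀ given Ũ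
      (∀ A : Set ℝ, MeasurableSet A →
        ∫ u in A ∩ Set.Icc (0:ℝ) 1, mtil u
          = ∫ ω, (Y1 ω - Y0 ω) * A.indicator 1 (U ω) ∂P) ∧
      -- (vi) m̃(P̃(z)) = θ̃(z) on 𝒵
      (∀ z ∈ 𝒵, mtil (Ptil z) = θtil z) ∧
      -- (vii) z ↦ E[Ỹ₀] + ∫₀^{P̃(z)} m̃ has derivative f(z)·P_T′(z) on 𝒵
      (∀ z ∈ 𝒵, HasDerivAt
        (fun z' => (∫ ω, Y0 ω ∂P) + ∫ u in (0:ℝ)..(Ptil z'), mtil u)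
        (f z * PT' z) z) := by
  have ha : ∀ z ∈ 𝒵, a z ≠ 0 := fun z hz =>
    (lt_of_lt_of_le (one_div_pos.2 (by linarith)) (harange z hz).1).ne'
  have hPtil' : ∀ z ∈ 𝒵, HasStrictDerivAt Ptil (a z * PT' z) z := fun z hz => by
    rw [show Ptil = _ from funext hPtil]
    exact (hasStrictDerivAt_integral_of_continuousOn (φ := fun t => a t * PT' t) h𝒵open h𝒵conn
      (hacont.mul hPT'cont) hz₀ hz).const_add btil
  have hPtil'ne : ∀ z ∈ 𝒵, a z * PT' z ≠ 0 := fun z hz => mul_ne_zero (ha z hz) (hPT'ne z hz)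
  have hθcont : ContinuousOn θtil 𝒵 := (hfcont.div hacont ha).congr fun z _ => hθtil z
  set m := compInvFunOn θtil Ptil 𝒵
  have hm_bdd : ∀ u, m u ∈ Icc (-1 : ℝ) 1 := compInvFunOn_mem (by norm_num) hθtil_bdd
  have hm_meas : Measurable m := measurable_compInvFunOn h𝒵open hPtilinj hPtil' hPtil'ne hθcont
  have hm_Ptil : ∀ z ∈ 𝒵, m (Ptil z) = θtil z := fun z hz => compInvFunOn_apply_image hPtilinj hz
  refine ⟨ℝ × ℝ × ℝ, inferInstance, ν.prod (uniform01.prod uniform01), inferInstance,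
    Prod.fst, fun ω => ω.2.1, fun ω => outcome (-m) ω.2, fun ω => outcome m ω.2, m,
    measurable_fst, by fun_prop, (measurable_outcome hm_meas.neg).comp measurable_snd,
    (measurable_outcome hm_meas).comp measurable_snd, hm_meas, fun u _ => hm_bdd u, ?_, ?_,
    indepFun_prod measurable_id ((measurable_outcome hm_meas.neg).prodMk
      ((measurable_outcome hm_meas).prodMk measurable_fst)),
    fun _ => outcome_eq_zero_or_one _ _, fun _ => outcome_eq_zero_or_one _ _, fun A hA => ?_,
    hm_Ptil, fun z hz => ?_⟩
  · exact measurePreserving_fst.map_eq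
  · exact (measurePreserving_fst.comp measurePreserving_snd).map_eq
  · beta_reduce
    rw [integral_fun_snd (fun p : ℝ × ℝ => (outcome m p - outcome (-m) p) * A.indicator 1 p.1),
      probReal_univ, one_smul,
      integral_outcome_sub_outcome_neg_mul_indicator hm_meas hm_bdd hA]
  · have hm_cont : ContinuousAt m (Ptil z) := continuousAt_compInvFunOn (h𝒵open.mem_nhds hz)
      hPtilinj (hPtil' z hz) (hPtil'ne z hz) (hθcont.continuousAt (h𝒵open.mem_nhds hz))
    have hval : m (Ptil z) * (a z * PT' z) = f z * PT' z := by
      rw [hm_Ptil z hz, hθtil]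
      field_simp [ha z hz]
    exact hval ▸ (hasDerivAt_integral_comp_of_continuousAt hm_meas (fun u => abs_le.2 (hm_bdd u))
      hm_cont (hPtil' z hz).hasDerivAt 0).const_add _

/-- **Proposition 3, sharp identified set for the MTE, binary outcome.**
Given an open interval `𝒵 ∋ z₀`, a Borel probability measure `ν` with `ν(𝒵) = 1`, `c ≥ 1`,
`P_T : 𝒵 → [0,1]` continuously differentiable with `P_T′ ≠ 0`, `f` continuous on `𝒵`,
a continuous `a : 𝒵 → [1/c, c]` and `b̃ ∈ ℝ` such that `P̃(z) = b̃ + ∫_{z₀}^z a·P_T′` is an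
injective map of `𝒵` into `[0,1]`, and `θ̃(z) = f(z)/a(z)` with `−1 ≤ θ̃ ≤ 1` on `𝒵`:
there exist a probability space carrying `Z, Ũ, Ỹ₀, Ỹ₁` and a Borel `m̃ : [0,1] → [−1,1]`
satisfying (i)–(vii). -/
theorem stmt_8
    (𝒵 : Set ℝ) (h𝒵open : IsOpen 𝒵) (h𝒵conn : 𝒵.OrdConnected)
    (z₀ : ℝ) (hz₀ : z₀ ∈ 𝒵)
    (ν : Measure ℝ) [IsProbabilityMeasure ν] (hν : ν 𝒵 = 1)
    (c : ℝ) (hc : 1 ≤ c)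
    (PT PT' f a : ℝ → ℝ)
    (hPT01 : ∀ z ∈ 𝒵, PT z ∈ Set.Icc (0:ℝ) 1)
    (hPT : ∀ z ∈ 𝒵, HasDerivAt PT (PT' z) z)
    (hPT'cont : ContinuousOn PT' 𝒵)
    (hPT'ne : ∀ z ∈ 𝒵, PT' z ≠ 0)
    (hfcont : ContinuousOn f 𝒵)
    (hacont : ContinuousOn a 𝒵)
    (harange : ∀ z ∈ 𝒵, a z ∈ Set.Icc (1 / c) c)
    (btil : ℝ)
    (Ptil : ℝ → ℝ) (hPtil : ∀ z, Ptil z = btil + ∫ t in z₀..z, a t * PT' t)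
    (hPtilinj : Set.InjOn Ptil 𝒵)
    (hPtil01 : ∀ z ∈ 𝒵, Ptil z ∈ Set.Icc (0:ℝ) 1)
    (θtil : ℝ → ℝ) (hθtil : ∀ z, θtil z = f z / a z)
    (hθtil_bdd : ∀ z ∈ 𝒵, θtil z ∈ Set.Icc (-1 : ℝ) 1) :
    ∃ (Ω : Type) (_ : MeasurableSpace Ω) (P : Measure Ω) (_ : IsProbabilityMeasure P)
      (Z U Y0 Y1 : Ω → ℝ) (mtil : ℝ → ℝ),
      Measurable Z ∧ Measurable U ∧ Measurable Y0 ∧ Measurable Y1 ∧ Measurable mtil ∧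
      (∀ u ∈ Set.Icc (0:ℝ) 1, mtil u ∈ Set.Icc (-1 : ℝ) 1) ∧
      -- (i) Z has law ν
      Measure.map Z P = ν ∧
      -- (ii) Ũ is uniformly distributed on [0,1]
      Measure.map U P = volume.restrict (Set.Icc (0:ℝ) 1) ∧
      -- (iii) Z is independent of (Ỹ₀, Ỹ₁, Ũ)
      IndepFun Z (fun ω => (Y0 ω, Y1 ω, U ω)) P ∧
      -- (iv) Ỹ₀ and Ỹ₁ take values in {0,1}
      (∀ ω, Y0 ω = 0 ∨ Y0 ω = 1) ∧ (∀ ω, Y1 ω = 0 ∨ Y1 ω = 1) ∧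
      -- (v) m̃ is a conditional-mean version of Ỹ₁ − Ỹ₀ given Ũ
      (∀ A : Set ℝ, MeasurableSet A →
        ∫ u in A ∩ Set.Icc (0:ℝ) 1, mtil u
          = ∫ ω, (Y1 ω - Y0 ω) * A.indicator 1 (U ω) ∂P) ∧
      -- (vi) m̃(P̃(z)) = θ̃(z) on 𝒵
      (∀ z ∈ 𝒵, mtil (Ptil z) = θtil z) ∧
      -- (vii) z ↦ E[Ỹ₀] + ∫₀^{P̃(z)} m̃ has derivative f(z)·P_T′(z) on 𝒵
      (∀ z ∈ 𝒵, HasDerivAt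
        (fun z' => (∫ ω, Y0 ω ∂P) + ∫ u in (0:ℝ)..(Ptil z'), mtil u)
        (f z * PT' z) z) :=
  stmt_8_general 𝒵 h𝒵open h𝒵conn z₀ hz₀ ν c hc PT' f a hPT'cont hPT'ne hfcont hacont harange btil
    Ptil hPtil hPtilinj θtil hθtil hθtil_bdd
end

section
/- Corollary F.1 (identifying the sign of the LATE). In the binary-instrument selection model, let T be a {0,1}-valued random variable on the same probability space and set ΔT := P[T = 1 | Z = 1] − P[T = 1 | Z = 0]. If ΔT > 0, then the sign of β equals the sign of ΔY/ΔT: β > 0 if and only if ΔY/ΔT > 0, β = 0 if and only if ΔY/ΔT = 0, and β < 0 if and only if ΔY/ΔT < 0. -/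
/-!
Independence of `Z` from `(Y₀, Y₁, U)` makes `E[Y | Z = z]` the unconditional mean of the outcome
`Y(p) = if U ≤ p then Y₁ else Y₀` at `p = p_z`. Hence
`ΔY = E[Y(p₁) - Y(p₀)] = E[1{p₀ < U ≤ p₁} (Y₁ - Y₀)] = (p₁ - p₀) β`, so `ΔY / ΔT` is a positive
multiple of `β` whenever `ΔT > 0`.
-/

open MeasureTheory ProbabilityTheory Set

lemma sign_iff_of_eq_pos_mul {α : Type*} [Field α] [LinearOrder α] [IsStrictOrderedRing α]
    {c x y : α} (hc : 0 < c) (hy : y = c * x) :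
    (0 < x ↔ 0 < y) ∧ (x = 0 ↔ y = 0) ∧ (x < 0 ↔ y < 0) := by
  subst hy
  exact ⟨(mul_pos_iff_of_pos_left hc).symm, by simp [hc.ne'], (smul_neg_iff_of_pos_left hc).symm⟩

section Conditioning

variable {Ω : Type*} [MeasurableSpace Ω] {P : Measure Ω}

lemma setIntegral_eq_measureReal_mul_integral_cond [IsFiniteMeasure P] {B : Set Ω}
    (f : Ω → ℝ) : ∫ ω in B, f ω ∂P = P.real B * ∫ ω, f ω ∂P[|B] := by
  by_cases hB : P B = 0
  · simp [Measure.restrict_eq_zero.mpr hB, measureReal_def, hB]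
  · rw [ProbabilityTheory.cond, integral_smul_measure, smul_eq_mul, ← mul_assoc,
      ENNReal.toReal_inv, ← measureReal_def, mul_inv_cancel₀ ((measureReal_ne_zero_iff).mpr hB),
      one_mul]

lemma ProbabilityTheory.IndepFun.integral_comp_cond_preimage {β γ : Type*} [MeasurableSpace β]
    [MeasurableSpace γ] [IsFiniteMeasure P] {X : Ω → β} {W : Ω → γ} (hX : Measurable X)
    (hW : AEMeasurable W P) (hXW : IndepFun X W P) {s : Set β} (hs : MeasurableSet s)
    (hPs : P (X ⁻¹' s) ≠ 0) {f : γ → ℝ} (hf : AEStronglyMeasurable f (P.map W)) :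
    ∫ ω, f (W ω) ∂P[|X ⁻¹' s] = ∫ ω, f (W ω) ∂P := by
  have hset := ((IndepFun_iff_Indep X W P).mp hXW).setIntegral_eq_mul hX.comap_le hW
    ⟨s, hs, rfl⟩ hf
  rw [setIntegral_eq_measureReal_mul_integral_cond] at hset
  exact mul_left_cancel₀ ((measureReal_ne_zero_iff).mpr hPs) hset

end Conditioning

section SelectionModel

variable {Ω : Type*} [MeasurableSpace Ω] {P : Measure Ω}

/-- The observed outcome of a unit with potential outcomes `q.1`, `q.2.1` and latent resistance
`q.2.2`, treated exactly when `q.2.2 ≤ p`. -/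
noncomputable def thresholdOutcome (p : ℝ) (q : ℝ × ℝ × ℝ) : ℝ :=
  if q.2.2 ≤ p then q.2.1 else q.1

lemma measurable_thresholdOutcome (p : ℝ) : Measurable (thresholdOutcome p) :=
  Measurable.ite (measurableSet_le measurable_snd.snd measurable_const) measurable_snd.fst
    measurable_fst

lemma thresholdOutcome_sub_thresholdOutcome {p₀ p₁ : ℝ} (h : p₀ ≤ p₁) (y₀ y₁ u : ℝ) :
    thresholdOutcome p₁ (y₀, y₁, u) - thresholdOutcome p₀ (y₀, y₁, u) =
      (Ioc p₀ p₁).indicator (fun _ => y₁ - y₀) u := by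
  by_cases h₁ : u ≤ p₁ <;> by_cases h₀ : u ≤ p₀ <;>
    simp [thresholdOutcome, indicator, h₁, h₀]; linarith

lemma integrable_thresholdOutcome {Y₀ Y₁ U : Ω → ℝ} (hY₀ : Integrable Y₀ P)
    (hY₁ : Integrable Y₁ P) (hU : Measurable U) (p : ℝ) :
    Integrable (fun ω => thresholdOutcome p (Y₀ ω, Y₁ ω, U ω)) P := by
  classical
  have hpiece := Integrable.piecewise (hU (measurableSet_Iic (a := p))) hY₁.integrableOn
    hY₀.integrableOn (μ := P)
  refine hpiece.congr (Filter.Eventually.of_forall fun ω => ?_)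
  simp [thresholdOutcome, piecewise]

lemma measureReal_preimage_Ioc_of_map_eq_uniform {U : Ω → ℝ} (hU : Measurable U)
    (hUnif : P.map U = volume.restrict (Icc 0 1)) {a b : ℝ} (ha : 0 ≤ a) (hab : a ≤ b)
    (hb : b ≤ 1) : P.real (U ⁻¹' Ioc a b) = b - a := by
  rw [measureReal_def, ← Measure.map_apply hU measurableSet_Ioc, hUnif,
    Measure.restrict_apply measurableSet_Ioc,
    inter_eq_self_of_subset_left (Ioc_subset_Icc_self.trans (Icc_subset_Icc ha hb)),
    Real.volume_Ioc, ENNReal.toReal_ofReal (sub_nonneg.2 hab)]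

end SelectionModel

theorem stmt_11_general
    {Ω : Type*} [MeasurableSpace Ω] (P : Measure Ω) [IsProbabilityMeasure P]
    (Z U Y0 Y1 : Ω → ℝ)
    (hZm : Measurable Z) (hUm : Measurable U) (hY0m : Measurable Y0) (hY1m : Measurable Y1)
    (hZ01 : ∀ ω, Z ω = 0 ∨ Z ω = 1)
    (hZpos : 0 < P (Z ⁻¹' {1})) (hZlt : P (Z ⁻¹' {1}) < 1)
    (hindep : IndepFun Z (fun ω => (Y0 ω, Y1 ω, U ω)) P)
    (hUnif : Measure.map U P = volume.restrict (Set.Icc (0:ℝ) 1))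
    (hY0int : Integrable Y0 P) (hY1int : Integrable Y1 P)
    (p0 p1 : ℝ) (hp0 : p0 ∈ Set.Icc (0:ℝ) 1) (hp1 : p1 ∈ Set.Icc (0:ℝ) 1) (hp01 : p0 < p1)
    (D : Ω → ℝ)
    (hD : ∀ ω, D ω = if Z ω = 1 then (if U ω ≤ p1 then 1 else 0)
                     else (if U ω ≤ p0 then 1 else 0))
    (Y : Ω → ℝ) (hY : ∀ ω, Y ω = D ω * Y1 ω + (1 - D ω) * Y0 ω)
    (ΔT : ℝ)
    (hΔTpos : 0 < ΔT)
    (ΔY : ℝ)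
    (hΔY : ΔY = (∫ ω, Y ω ∂(ProbabilityTheory.cond P (Z ⁻¹' {1})))
        - ∫ ω, Y ω ∂(ProbabilityTheory.cond P (Z ⁻¹' {0})))
    (β : ℝ)
    (hβ : β = ∫ ω, (Y1 ω - Y0 ω) ∂(ProbabilityTheory.cond P {ω | p0 < U ω ∧ U ω ≤ p1})) :
    (0 < β ↔ 0 < ΔY / ΔT) ∧ (β = 0 ↔ ΔY / ΔT = 0) ∧ (β < 0 ↔ ΔY / ΔT < 0) := by
  have hW : Measurable fun ω => (Y0 ω, Y1 ω, U ω) := hY0m.prodMk (hY1m.prodMk hUm)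
  have hE : ∀ z p, P (Z ⁻¹' {z}) ≠ 0 →
      (∀ ω, Z ω = z → Y ω = thresholdOutcome p (Y0 ω, Y1 ω, U ω)) →
      ∫ ω, Y ω ∂P[|Z ⁻¹' {z}] = ∫ ω, thresholdOutcome p (Y0 ω, Y1 ω, U ω) ∂P := by
    intro z p hz hYz
    rw [integral_congr_ae (ae_cond_of_forall_mem (hZm (measurableSet_singleton z)) hYz)]
    exact hindep.integral_comp_cond_preimage hZm hW.aemeasurable (measurableSet_singleton z) hz
      (measurable_thresholdOutcome p).aestronglyMeasurable
  have hZ0 : P (Z ⁻¹' {0}) ≠ 0 := by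
    have hcompl : Z ⁻¹' {0} = (Z ⁻¹' {1})ᶜ := by
      ext ω; rcases hZ01 ω with h | h <;> simp [h]
    rw [hcompl, prob_compl_eq_one_sub (hZm (measurableSet_singleton 1))]
    exact (tsub_pos_of_lt hZlt).ne'
  have hE1 := hE 1 p1 hZpos.ne' fun ω hω => by
    by_cases h : U ω ≤ p1 <;> simp [hY, hD, hω, thresholdOutcome, h]
  have hE0 := hE 0 p0 hZ0 fun ω hω => by
    by_cases h : U ω ≤ p0 <;> simp [hY, hD, hω, thresholdOutcome, h]
  have hwald : ΔY = (p1 - p0) * β := by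
    rw [hΔY, hE1, hE0, ← integral_sub (integrable_thresholdOutcome hY0int hY1int hUm p1)
      (integrable_thresholdOutcome hY0int hY1int hUm p0)]
    simp_rw [thresholdOutcome_sub_thresholdOutcome hp01.le]
    change ∫ ω, (U ⁻¹' Ioc p0 p1).indicator (fun ω => Y1 ω - Y0 ω) ω ∂P = _
    rw [integral_indicator (hUm measurableSet_Ioc), setIntegral_eq_measureReal_mul_integral_cond,
      measureReal_preimage_Ioc_of_map_eq_uniform hUm hUnif hp0.1 hp01.le hp1.2, hβ]
    rfl
  exact sign_iff_of_eq_pos_mul (div_pos (sub_pos.2 hp01) hΔTpos) (by rw [hwald]; ring)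

/-- **Corollary F.1, identifying the sign of the LATE.**
In the binary-instrument selection model, with `T` a `{0,1}`-valued random variable and
`ΔT = P[T = 1 | Z = 1] − P[T = 1 | Z = 0] > 0`, the sign of the LATE
`β = E[Y₁ − Y₀ | p₀ < U ≤ p₁]` equals the sign of `ΔY/ΔT`. -/
theorem stmt_11
    {Ω : Type*} [MeasurableSpace Ω] (P : Measure Ω) [IsProbabilityMeasure P]
    (Z U Y0 Y1 : Ω → ℝ)
    (hZm : Measurable Z) (hUm : Measurable U) (hY0m : Measurable Y0) (hY1m : Measurable Y1)
    (hZ01 : ∀ ω, Z ω = 0 ∨ Z ω = 1)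
    (hZpos : 0 < P (Z ⁻¹' {1})) (hZlt : P (Z ⁻¹' {1}) < 1)
    (hindep : IndepFun Z (fun ω => (Y0 ω, Y1 ω, U ω)) P)
    (hUnif : Measure.map U P = volume.restrict (Set.Icc (0:ℝ) 1))
    (hY0int : Integrable Y0 P) (hY1int : Integrable Y1 P)
    (p0 p1 : ℝ) (hp0 : p0 ∈ Set.Icc (0:ℝ) 1) (hp1 : p1 ∈ Set.Icc (0:ℝ) 1) (hp01 : p0 < p1)
    (D : Ω → ℝ)
    (hD : ∀ ω, D ω = if Z ω = 1 then (if U ω ≤ p1 then 1 else 0)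
                     else (if U ω ≤ p0 then 1 else 0))
    (Y : Ω → ℝ) (hY : ∀ ω, Y ω = D ω * Y1 ω + (1 - D ω) * Y0 ω)
    (T : Ω → ℝ) (hTm : Measurable T) (hT01 : ∀ ω, T ω = 0 ∨ T ω = 1)
    (ΔT : ℝ)
    (hΔT : ΔT = ((ProbabilityTheory.cond P (Z ⁻¹' {1})) (T ⁻¹' {1})).toReal
        - ((ProbabilityTheory.cond P (Z ⁻¹' {0})) (T ⁻¹' {1})).toReal)
    (hΔTpos : 0 < ΔT)
    (ΔY : ℝ)
    (hΔY : ΔY = (∫ ω, Y ω ∂(ProbabilityTheory.cond P (Z ⁻¹' {1})))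
        - ∫ ω, Y ω ∂(ProbabilityTheory.cond P (Z ⁻¹' {0})))
    (β : ℝ)
    (hβ : β = ∫ ω, (Y1 ω - Y0 ω) ∂(ProbabilityTheory.cond P {ω | p0 < U ω ∧ U ω ≤ p1})) :
    (0 < β ↔ 0 < ΔY / ΔT) ∧ (β = 0 ↔ ΔY / ΔT = 0) ∧ (β < 0 ↔ ΔY / ΔT < 0) :=
  stmt_11_general P Z U Y0 Y1 hZm hUm hY0m hY1m hZ01 hZpos hZlt hindep hUnif hY0int hY1int p0 p1 hp0
    hp1 hp01 D hD Y hY ΔT hΔTpos ΔY hΔY β hβ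
end

section
/- Corollary F.2 (bounds for the LATE). In the binary-instrument selection model, let T be a {0,1}-valued random variable on the same probability space, set ΔT := P[T = 1 | Z = 1] − P[T = 1 | Z = 0] and ΔD := p₁ − p₀, and suppose ΔT ≠ 0 and ΔD/ΔT ∈ [1/c, c] for some c ∈ [1, ∞). Then: if ΔY/ΔT > 0, then (1/c)·(ΔY/ΔT) ≤ β ≤ c·(ΔY/ΔT); if ΔY/ΔT = 0, then β = 0; and if ΔY/ΔT < 0, then c·(ΔY/ΔT) ≤ β ≤ (1/c)·(ΔY/ΔT). -/
open MeasureTheory ProbabilityTheory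

/-!
Since `Z` is independent of `(Y₀, Y₁, U)`, conditioning on `{Z = z}` does not change the mean of
`Y₀ + 1{U ≤ p_z}·(Y₁ − Y₀)`, which is what `Y` equals on that event. Subtracting the two means
gives the Wald identity `ΔY = E[1{p₀ < U ≤ p₁}·(Y₁ − Y₀)] = (p₁ − p₀)·β`, so
`ΔY/ΔT = β·(ΔD/ΔT)` with a factor `ΔD/ΔT ∈ [1/c, c]`, which is positive; the three cases are
then monotonicity of multiplication.
-/

section General

variable {Ω : Type*} [MeasurableSpace Ω] {P : Measure Ω}

theorem integral_cond_eq_inv_mul_integral_indicator {s : Set Ω} (hs : MeasurableSet s)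
    (f : Ω → ℝ) :
    ∫ ω, f ω ∂P[|s] = (P.real s)⁻¹ * ∫ ω, s.indicator f ω ∂P := by
  rw [ProbabilityTheory.cond, integral_smul_measure, integral_indicator hs, ENNReal.toReal_inv]
  rfl

theorem integral_cond_preimage_of_indepFun {α : Type*} [MeasurableSpace α] [IsFiniteMeasure P]
    {Z : Ω → α} {g : Ω → ℝ} {A : Set α} (hZ : Measurable Z) (hA : MeasurableSet A)
    (hind : IndepFun Z g P) (hg : AEStronglyMeasurable g P) (hpos : P (Z ⁻¹' A) ≠ 0) :
    ∫ ω, g ω ∂P[|Z ⁻¹' A] = ∫ ω, g ω ∂P := by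
  have hs : MeasurableSet (Z ⁻¹' A) := hZ hA
  have hind' : IndepFun ((Z ⁻¹' A).indicator 1) g P :=
    hind.comp (φ := A.indicator (1 : α → ℝ)) (measurable_one.indicator hA) measurable_id
  have hprod : ∫ ω, (Z ⁻¹' A).indicator g ω ∂P = P.real (Z ⁻¹' A) * ∫ ω, g ω ∂P := by
    have h := hind'.integral_fun_mul_eq_mul_integral
      (measurable_one.indicator hs).aestronglyMeasurable hg
    simp only [← Set.indicator_mul_left, Pi.one_apply, one_mul] at h
    rw [h, integral_indicator_one hs]
  rw [integral_cond_eq_inv_mul_integral_indicator hs, hprod, ← mul_assoc,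
    inv_mul_cancel₀ ((measureReal_ne_zero_iff).mpr hpos), one_mul]

theorem measureReal_preimage_Ioc_of_map_eq_restrict_Icc {U : Ω → ℝ} (hU : Measurable U)
    (hUnif : P.map U = volume.restrict (Set.Icc (0 : ℝ) 1)) {a b : ℝ} (ha : 0 ≤ a) (hb : b ≤ 1)
    (hab : a ≤ b) : P.real (U ⁻¹' Set.Ioc a b) = b - a := by
  have hsub : Set.Ioc a b ⊆ Set.Icc 0 1 := fun x hx => ⟨ha.trans hx.1.le, hx.2.trans hb⟩
  rw [measureReal_def, ← Measure.map_apply hU measurableSet_Ioc, hUnif,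
    Measure.restrict_apply measurableSet_Ioc, Set.inter_eq_left.mpr hsub, Real.volume_Ioc,
    ENNReal.toReal_ofReal (sub_nonneg.mpr hab)]

theorem bounds_of_mul_of_mem_Icc {β r c : ℝ} (hc : 0 < c) (hr : r ∈ Set.Icc (1 / c) c) :
    (0 < β * r → 1 / c * (β * r) ≤ β ∧ β ≤ c * (β * r)) ∧
    (β * r = 0 → β = 0) ∧
    (β * r < 0 → c * (β * r) ≤ β ∧ β ≤ 1 / c * (β * r)) := by
  obtain ⟨hr1, hr2⟩ := hr
  have hcinv : 0 < 1 / c := by positivity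
  have hr0 : 0 < r := hcinv.trans_le hr1
  have hcc : c * (1 / c) = 1 := by field_simp
  refine ⟨fun h => ?_, fun h => (mul_eq_zero.mp h).resolve_right hr0.ne', fun h => ?_⟩
  · have hβ : 0 < β := pos_of_mul_pos_left h hr0.le
    constructor <;> nlinarith [mul_le_mul_of_nonneg_left hr2 hβ.le,
      mul_le_mul_of_nonneg_left hr1 hβ.le]
  · have hβ : β < 0 := neg_of_mul_neg_left h hr0.le
    constructor <;> nlinarith [mul_le_mul_of_nonpos_left hr2 hβ.le,
      mul_le_mul_of_nonpos_left hr1 hβ.le]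

end General

namespace SelectionModel

variable {Ω : Type*} {Y0 Y1 U : Ω → ℝ}

noncomputable def selectedOutcome (Y0 Y1 U : Ω → ℝ) (p : ℝ) (ω : Ω) : ℝ :=
  Y0 ω + (U ⁻¹' Set.Iic p).indicator (fun ω => Y1 ω - Y0 ω) ω

theorem treatment_mul_add_eq_selectedOutcome {p d : ℝ} {ω : Ω}
    (hd : d = if U ω ≤ p then 1 else 0) :
    d * Y1 ω + (1 - d) * Y0 ω = selectedOutcome Y0 Y1 U p ω := by
  by_cases h : U ω ≤ p <;> simp [selectedOutcome, hd, h]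

theorem selectedOutcome_sub_selectedOutcome {p0 p1 : ℝ} (h : p0 ≤ p1) :
    selectedOutcome Y0 Y1 U p1 - selectedOutcome Y0 Y1 U p0
      = (U ⁻¹' Set.Ioc p0 p1).indicator (fun ω => Y1 ω - Y0 ω) := by
  ext ω
  simp only [selectedOutcome, Pi.sub_apply, ← Set.Iic_sdiff_Iic, Set.preimage_sdiff,
    Set.indicator_sdiff (Set.preimage_mono (Set.Iic_subset_Iic.mpr h))]
  ring

variable [MeasurableSpace Ω] {P : Measure Ω}

theorem indepFun_selectedOutcome {β : Type*} [MeasurableSpace β] {Z : Ω → β}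
    (hindep : IndepFun Z (fun ω => (Y0 ω, Y1 ω, U ω)) P) (p : ℝ) :
    IndepFun Z (selectedOutcome Y0 Y1 U p) P := by
  have hψ : Measurable fun w : ℝ × ℝ × ℝ =>
      w.1 + (Set.Iic p).indicator (fun _ => w.2.1 - w.1) w.2.2 := by
    refine measurable_fst.add (Measurable.ite ?_ ?_ measurable_const)
    · exact measurableSet_Iic.preimage measurable_snd.snd
    · exact measurable_snd.fst.sub measurable_fst
  exact hindep.comp measurable_id hψ

theorem integrable_selectedOutcome (hU : Measurable U) (hY0 : Integrable Y0 P)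
    (hY1 : Integrable Y1 P) (p : ℝ) : Integrable (selectedOutcome Y0 Y1 U p) P :=
  hY0.add ((hY1.sub hY0).indicator (hU measurableSet_Iic))

theorem integral_cond_eq_integral_selectedOutcome [IsFiniteMeasure P] {Z D : Ω → ℝ}
    (hZ : Measurable Z) (hU : Measurable U) (hY0 : Integrable Y0 P) (hY1 : Integrable Y1 P)
    (hindep : IndepFun Z (fun ω => (Y0 ω, Y1 ω, U ω)) P) {z p : ℝ} (hpos : P (Z ⁻¹' {z}) ≠ 0)
    (hD : ∀ ω, Z ω = z → D ω = if U ω ≤ p then 1 else 0) :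
    ∫ ω, D ω * Y1 ω + (1 - D ω) * Y0 ω ∂P[|Z ⁻¹' {z}]
      = ∫ ω, selectedOutcome Y0 Y1 U p ω ∂P := by
  rw [← integral_cond_preimage_of_indepFun hZ (measurableSet_singleton z)
    (indepFun_selectedOutcome hindep p)
    (integrable_selectedOutcome hU hY0 hY1 p).aestronglyMeasurable hpos]
  refine integral_congr_ae (ae_cond_of_forall_mem (hZ (measurableSet_singleton z)) ?_)
  exact fun ω hω => treatment_mul_add_eq_selectedOutcome (hD ω hω)

theorem integral_cond_sub_integral_cond_eq_mul_late [IsProbabilityMeasure P] {Z D : Ω → ℝ}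
    (hZ : Measurable Z) (hU : Measurable U) (hZ01 : ∀ ω, Z ω = 0 ∨ Z ω = 1)
    (hZpos : 0 < P (Z ⁻¹' {1})) (hZlt : P (Z ⁻¹' {1}) < 1)
    (hindep : IndepFun Z (fun ω => (Y0 ω, Y1 ω, U ω)) P)
    (hUnif : P.map U = volume.restrict (Set.Icc (0 : ℝ) 1))
    (hY0 : Integrable Y0 P) (hY1 : Integrable Y1 P) {p0 p1 : ℝ} (hp0 : 0 ≤ p0) (hp1 : p1 ≤ 1)
    (hp01 : p0 < p1)
    (hD : ∀ ω, D ω = if Z ω = 1 then (if U ω ≤ p1 then 1 else 0)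
                     else (if U ω ≤ p0 then 1 else 0)) :
    (∫ ω, D ω * Y1 ω + (1 - D ω) * Y0 ω ∂P[|Z ⁻¹' {1}])
        - ∫ ω, D ω * Y1 ω + (1 - D ω) * Y0 ω ∂P[|Z ⁻¹' {0}]
      = (p1 - p0) * ∫ ω, (Y1 ω - Y0 ω) ∂P[|{ω | p0 < U ω ∧ U ω ≤ p1}] := by
  have hZ0 : P (Z ⁻¹' {0}) ≠ 0 := by
    have hcompl : Z ⁻¹' {0} = (Z ⁻¹' {1})ᶜ := by
      ext ω
      rcases hZ01 ω with h | h <;> simp [h]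
    rw [hcompl, prob_compl_eq_one_sub (hZ (measurableSet_singleton 1))]
    exact (tsub_pos_of_lt hZlt).ne'
  have hS : {ω | p0 < U ω ∧ U ω ≤ p1} = U ⁻¹' Set.Ioc p0 p1 := rfl
  rw [integral_cond_eq_integral_selectedOutcome (p := p1) hZ hU hY0 hY1 hindep hZpos.ne'
      fun ω h => by simp [hD ω, h],
    integral_cond_eq_integral_selectedOutcome (p := p0) hZ hU hY0 hY1 hindep hZ0
      fun ω h => by simp [hD ω, h],
    ← integral_sub (integrable_selectedOutcome hU hY0 hY1 p1)
      (integrable_selectedOutcome hU hY0 hY1 p0),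
    hS, integral_cond_eq_inv_mul_integral_indicator (hU measurableSet_Ioc),
    measureReal_preimage_Ioc_of_map_eq_restrict_Icc hU hUnif hp0 hp1 hp01.le,
    mul_inv_cancel_left₀ (sub_pos.mpr hp01).ne']
  exact congrArg (integral P) (selectedOutcome_sub_selectedOutcome hp01.le)

end SelectionModel

theorem stmt_12_general
    {Ω : Type*} [MeasurableSpace Ω] (P : Measure Ω) [IsProbabilityMeasure P]
    (Z U Y0 Y1 : Ω → ℝ)
    (hZm : Measurable Z) (hUm : Measurable U)
    (hZ01 : ∀ ω, Z ω = 0 ∨ Z ω = 1)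
    (hZpos : 0 < P (Z ⁻¹' {1})) (hZlt : P (Z ⁻¹' {1}) < 1)
    (hindep : IndepFun Z (fun ω => (Y0 ω, Y1 ω, U ω)) P)
    (hUnif : Measure.map U P = volume.restrict (Set.Icc (0:ℝ) 1))
    (hY0int : Integrable Y0 P) (hY1int : Integrable Y1 P)
    (p0 p1 : ℝ) (hp0 : p0 ∈ Set.Icc (0:ℝ) 1) (hp1 : p1 ∈ Set.Icc (0:ℝ) 1) (hp01 : p0 < p1)
    (D : Ω → ℝ)
    (hD : ∀ ω, D ω = if Z ω = 1 then (if U ω ≤ p1 then 1 else 0)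
                     else (if U ω ≤ p0 then 1 else 0))
    (Y : Ω → ℝ) (hY : ∀ ω, Y ω = D ω * Y1 ω + (1 - D ω) * Y0 ω)
    (ΔT : ℝ)
    (c : ℝ) (hc : 1 ≤ c)
    (hratio : (p1 - p0) / ΔT ∈ Set.Icc (1 / c) c)
    (ΔY : ℝ)
    (hΔY : ΔY = (∫ ω, Y ω ∂(ProbabilityTheory.cond P (Z ⁻¹' {1})))
        - ∫ ω, Y ω ∂(ProbabilityTheory.cond P (Z ⁻¹' {0})))
    (β : ℝ)
    (hβ : β = ∫ ω, (Y1 ω - Y0 ω) ∂(ProbabilityTheory.cond P {ω | p0 < U ω ∧ U ω ≤ p1})) :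
    (0 < ΔY / ΔT → (1 / c) * (ΔY / ΔT) ≤ β ∧ β ≤ c * (ΔY / ΔT)) ∧
    (ΔY / ΔT = 0 → β = 0) ∧
    (ΔY / ΔT < 0 → c * (ΔY / ΔT) ≤ β ∧ β ≤ (1 / c) * (ΔY / ΔT)) := by
  obtain rfl : Y = fun ω => D ω * Y1 ω + (1 - D ω) * Y0 ω := funext hY
  have hwald : ΔY = (p1 - p0) * β := by
    rw [hΔY, hβ]
    exact SelectionModel.integral_cond_sub_integral_cond_eq_mul_late hZm hUm hZ01 hZpos hZlt hindep hUnif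
      hY0int hY1int hp0.1 hp1.2 hp01 hD
  have hΔY_div : ΔY / ΔT = β * ((p1 - p0) / ΔT) := by
    rw [hwald]
    ring
  rw [hΔY_div]
  exact bounds_of_mul_of_mem_Icc (zero_lt_one.trans_le hc) hratio

/-- **Corollary F.2, bounds for the LATE.**
In the binary-instrument selection model, with `T` a `{0,1}`-valued random variable,
`ΔT = P[T = 1 | Z = 1] − P[T = 1 | Z = 0] ≠ 0`, `ΔD = p₁ − p₀`, and `ΔD/ΔT ∈ [1/c, c]`
for some `c ≥ 1`: if `ΔY/ΔT > 0` then `(1/c)·(ΔY/ΔT) ≤ β ≤ c·(ΔY/ΔT)`; if `ΔY/ΔT = 0` then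
`β = 0`; and if `ΔY/ΔT < 0` then `c·(ΔY/ΔT) ≤ β ≤ (1/c)·(ΔY/ΔT)`. -/
theorem stmt_12
    {Ω : Type*} [MeasurableSpace Ω] (P : Measure Ω) [IsProbabilityMeasure P]
    (Z U Y0 Y1 : Ω → ℝ)
    (hZm : Measurable Z) (hUm : Measurable U) (hY0m : Measurable Y0) (hY1m : Measurable Y1)
    (hZ01 : ∀ ω, Z ω = 0 ∨ Z ω = 1)
    (hZpos : 0 < P (Z ⁻¹' {1})) (hZlt : P (Z ⁻¹' {1}) < 1)
    (hindep : IndepFun Z (fun ω => (Y0 ω, Y1 ω, U ω)) P)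
    (hUnif : Measure.map U P = volume.restrict (Set.Icc (0:ℝ) 1))
    (hY0int : Integrable Y0 P) (hY1int : Integrable Y1 P)
    (p0 p1 : ℝ) (hp0 : p0 ∈ Set.Icc (0:ℝ) 1) (hp1 : p1 ∈ Set.Icc (0:ℝ) 1) (hp01 : p0 < p1)
    (D : Ω → ℝ)
    (hD : ∀ ω, D ω = if Z ω = 1 then (if U ω ≤ p1 then 1 else 0)
                     else (if U ω ≤ p0 then 1 else 0))
    (Y : Ω → ℝ) (hY : ∀ ω, Y ω = D ω * Y1 ω + (1 - D ω) * Y0 ω)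
    (T : Ω → ℝ) (hTm : Measurable T) (hT01 : ∀ ω, T ω = 0 ∨ T ω = 1)
    (ΔT : ℝ)
    (hΔT : ΔT = ((ProbabilityTheory.cond P (Z ⁻¹' {1})) (T ⁻¹' {1})).toReal
        - ((ProbabilityTheory.cond P (Z ⁻¹' {0})) (T ⁻¹' {1})).toReal)
    (hΔTne : ΔT ≠ 0)
    (c : ℝ) (hc : 1 ≤ c)
    (hratio : (p1 - p0) / ΔT ∈ Set.Icc (1 / c) c)
    (ΔY : ℝ)
    (hΔY : ΔY = (∫ ω, Y ω ∂(ProbabilityTheory.cond P (Z ⁻¹' {1})))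
        - ∫ ω, Y ω ∂(ProbabilityTheory.cond P (Z ⁻¹' {0})))
    (β : ℝ)
    (hβ : β = ∫ ω, (Y1 ω - Y0 ω) ∂(ProbabilityTheory.cond P {ω | p0 < U ω ∧ U ω ≤ p1})) :
    (0 < ΔY / ΔT → (1 / c) * (ΔY / ΔT) ≤ β ∧ β ≤ c * (ΔY / ΔT)) ∧
    (ΔY / ΔT = 0 → β = 0) ∧
    (ΔY / ΔT < 0 → c * (ΔY / ΔT) ≤ β ∧ β ≤ (1 / c) * (ΔY / ΔT)) :=
  stmt_12_general P Z U Y0 Y1 hZm hUm hZ01 hZpos hZlt hindep hUnif hY0int hY1int p0 p1 hp0 hp1 hp01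
    D hD Y hY ΔT c hc hratio ΔY hΔY β hβ
end

section
/- Proposition F.2 (sharp identified set for the LATE, binary outcome). Let 0 ≤ p₀ < p₁ ≤ 1 with p₁ > 0, let q ∈ (0,1), let ΔY ∈ ℝ, let c ∈ [1, 1/p₁], let a ∈ [1/c, c], and set β̃ := (1/a)·ΔY/(p₁ − p₀); assume −1 ≤ β̃ ≤ 1. Then there exist a probability space carrying random variables Z, Ũ, Ỹ₀, Ỹ₁ such that: (i) Z takes values in {0,1} with P(Z = 1) = q; (ii) Ũ is uniformly distributed on [0,1]; (iii) Z is independent of (Ỹ₀, Ỹ₁, Ũ); (iv) Ỹ₀, Ỹ₁ take values in {0,1}; and, defining D̃ := 1{Ũ ≤ a·p₁} on {Z = 1} and D̃ := 1{Ũ ≤ a·p₀} on {Z = 0}, and Ỹ := D̃·Ỹ₁ + (1 − D̃)·Ỹ₀: (v) E[Ỹ₁ − Ỹ₀ | a·p₀ < Ũ ≤ a·p₁] = β̃; and (vi) E[Ỹ | Z = 1] − E[Ỹ | Z = 0] = ΔY. -/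
/-!
Take `Z ~ Bernoulli(q)` and `Ũ ~ U[0,1]` independent, on `Bool × ℝ` with the product measure, and
let the potential outcomes be indicators of initial segments of the complier band
`(L, R] = (a p₀, a p₁]`: `Ỹ₁ = 1{L < Ũ ≤ L + β̃⁺ (R - L)}`, `Ỹ₀ = 1{L < Ũ ≤ L + β̃⁻ (R - L)}`,
which is possible because `|β̃| ≤ 1`. Both vanish off the band, so `Ỹ = Ỹ₁` on `{Z = 1}` and
`Ỹ = Ỹ₀` on `{Z = 0}`; by independence the Wald difference is then
`E Ỹ₁ - E Ỹ₀ = (β̃⁺ - β̃⁻)(R - L) = β̃ a (p₁ - p₀) = ΔY`, and on the band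
`E[Ỹ₁ - Ỹ₀ | L < Ũ ≤ R] = β̃`.
-/

open MeasureTheory ProbabilityTheory Set

section ProdCond
variable {α β : Type*} [MeasurableSpace α] [MeasurableSpace β] {μ : Measure α} {ν : Measure β}

lemma cond_prod_fst_preimage [SFinite μ] [IsProbabilityMeasure ν] (s : Set α) :
    (μ.prod ν)[|Prod.fst ⁻¹' s] = μ[|s].prod ν := by
  rw [ProbabilityTheory.cond, ProbabilityTheory.cond, ← prod_univ,
    ← Measure.restrict_prod_eq_prod_univ, Measure.prod_prod, measure_univ, mul_one,
    Measure.prod_smul_left]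

lemma cond_prod_snd_preimage [IsProbabilityMeasure μ] [SFinite ν] (t : Set β) :
    (μ.prod ν)[|Prod.snd ⁻¹' t] = μ.prod ν[|t] := by
  rw [ProbabilityTheory.cond, ProbabilityTheory.cond, ← univ_prod, ← Measure.prod_restrict,
    Measure.restrict_univ, Measure.prod_prod, measure_univ, one_mul, Measure.prod_smul_right]

lemma integral_comp_snd_cond_fst_preimage [IsFiniteMeasure μ] [IsProbabilityMeasure ν]
    {s : Set α} (hμs : μ s ≠ 0) (f : β → ℝ) :
    ∫ z, f z.2 ∂(μ.prod ν)[|Prod.fst ⁻¹' s] = ∫ y, f y ∂ν := by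
  have := cond_isProbabilityMeasure hμs
  rw [cond_prod_fst_preimage, integral_fun_snd, probReal_univ, one_smul]

end ProdCond

instance : IsProbabilityMeasure (volume.restrict (Icc (0 : ℝ) 1)) :=
  ⟨by simp⟩

lemma uniform_real_Ioc {x y : ℝ} (hx : 0 ≤ x) (hxy : x ≤ y) (hy : y ≤ 1) :
    (volume.restrict (Icc (0 : ℝ) 1)).real (Ioc x y) = y - x := by
  rw [measureReal_restrict_apply measurableSet_Ioc,
    inter_eq_left.mpr (Ioc_subset_Icc_self.trans (Icc_subset_Icc hx hy)),
    Real.volume_real_Ioc_of_le hxy]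

lemma uniform_cond_real_Ioc {x y z : ℝ} (hx : 0 ≤ x) (hxy : x ≤ y) (hyz : y ≤ z) (hz : z ≤ 1) :
    ((volume.restrict (Icc (0 : ℝ) 1))[|Ioc x z]).real (Ioc x y) = (y - x) / (z - x) := by
  rw [measureReal_def, cond_apply measurableSet_Ioc,
    inter_eq_right.mpr (Ioc_subset_Ioc_right hyz), ENNReal.toReal_mul, ENNReal.toReal_inv,
    ← measureReal_def, ← measureReal_def,
    uniform_real_Ioc hx hxy (hyz.trans hz), uniform_real_Ioc hx (hxy.trans hyz) hz, div_eq_inv_mul]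

namespace LateModel

noncomputable def measure (q : unitInterval) : Measure (Bool × ℝ) :=
  Ber(true, false, q).prod (volume.restrict (Icc 0 1))

def instrument (ω : Bool × ℝ) : ℝ := if ω.1 then 1 else 0

noncomputable def potentialOutcome (L t : ℝ) (ω : Bool × ℝ) : ℝ := (Ioc L t).indicator 1 ω.2

noncomputable def treatment (L R : ℝ) (ω : Bool × ℝ) : ℝ :=
  if instrument ω = 1 then (if ω.2 ≤ R then 1 else 0) else (if ω.2 ≤ L then 1 else 0)

noncomputable def observedOutcome (L R t₀ t₁ : ℝ) (ω : Bool × ℝ) : ℝ :=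
  treatment L R ω * potentialOutcome L t₁ ω + (1 - treatment L R ω) * potentialOutcome L t₀ ω

variable {q : unitInterval} {L R t t₀ t₁ : ℝ}

instance : IsProbabilityMeasure (measure q) := by unfold measure; infer_instance

lemma measurable_instrument : Measurable instrument :=
  (measurable_of_countable fun b : Bool => if b then (1 : ℝ) else 0).comp measurable_fst

lemma measurable_potentialOutcome : Measurable (potentialOutcome L t) :=
  (measurable_one.indicator measurableSet_Ioc).comp measurable_snd

lemma instrument_eq_zero_or_one (ω : Bool × ℝ) : instrument ω = 0 ∨ instrument ω = 1 := by
  unfold instrument; split_ifs <;> simp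

lemma potentialOutcome_eq_zero_or_one (ω : Bool × ℝ) :
    potentialOutcome L t ω = 0 ∨ potentialOutcome L t ω = 1 := by
  unfold potentialOutcome; by_cases h : ω.2 ∈ Ioc L t <;> simp [h]

lemma instrument_preimage_one : instrument ⁻¹' {1} = Prod.fst ⁻¹' {true} := by
  ext ⟨b, u⟩; cases b <;> simp [instrument]

lemma instrument_preimage_zero : instrument ⁻¹' {0} = Prod.fst ⁻¹' {false} := by
  ext ⟨b, u⟩; cases b <;> simp [instrument]

lemma measure_instrument_preimage_one : measure q (instrument ⁻¹' {1}) = ENNReal.ofReal q := by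
  rw [instrument_preimage_one, measure, ← prod_univ, Measure.prod_prod, measure_univ, mul_one,
    bernoulliMeasure_apply_of_mem_of_notMem q (measurableSet_singleton _) rfl (by simp),
    ← ENNReal.ofReal_coe_nnreal, unitInterval.coe_toNNReal]

lemma map_snd_measure : (measure q).map Prod.snd = volume.restrict (Icc 0 1) := by
  rw [measure, Measure.map_snd_prod, measure_univ, one_smul]

lemma indepFun_instrument :
    IndepFun instrument (fun ω => (potentialOutcome L t₀ ω, potentialOutcome L t₁ ω, ω.2))
      (measure q) :=
  indepFun_prod (X := fun b : Bool => if b then (1 : ℝ) else 0)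
    (Y := fun u : ℝ => ((Ioc L t₀).indicator 1 u, (Ioc L t₁).indicator 1 u, u))
    (measurable_of_countable _) (by measurability)

lemma observedOutcome_of_instrument_eq_one (h₀ : t₀ ≤ R) (h₁ : t₁ ≤ R) {ω : Bool × ℝ}
    (hω : instrument ω = 1) : observedOutcome L R t₀ t₁ ω = potentialOutcome L t₁ ω := by
  by_cases hR : ω.2 ≤ R
  · simp [observedOutcome, treatment, hω, hR]
  · have hout : ∀ t ≤ R, potentialOutcome L t ω = 0 := fun t ht =>
      indicator_of_notMem (fun hu => hR ((mem_Ioc.mp hu).2.trans ht)) _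
    simp [observedOutcome, treatment, hω, hR, hout t₀ h₀, hout t₁ h₁]

lemma observedOutcome_of_instrument_eq_zero {ω : Bool × ℝ} (hω : instrument ω = 0) :
    observedOutcome L R t₀ t₁ ω = potentialOutcome L t₀ ω := by
  by_cases hL : ω.2 ≤ L
  · have hout : ∀ t, potentialOutcome L t ω = 0 := fun t =>
      indicator_of_notMem (fun hu => (mem_Ioc.mp hu).1.not_ge hL) _
    simp [observedOutcome, treatment, hω, hL, hout]
  · simp [observedOutcome, treatment, hω, hL]

lemma integral_potentialOutcome_cond_fst_preimage {s : Set Bool}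
    (hs : Ber(true, false, q) s ≠ 0) (hL : 0 ≤ L) (hLt : L ≤ t) (ht : t ≤ 1) :
    ∫ ω, potentialOutcome L t ω ∂(measure q)[|Prod.fst ⁻¹' s] = t - L := by
  unfold measure potentialOutcome
  rw [integral_comp_snd_cond_fst_preimage hs,
    integral_indicator_one measurableSet_Ioc, uniform_real_Ioc hL hLt ht]

lemma integral_observedOutcome_cond_instrument_one (hq : (q : ℝ) ≠ 0) (hL : 0 ≤ L)
    (h₀ : t₀ ≤ R) (hLt₁ : L ≤ t₁) (h₁ : t₁ ≤ R) (hR : R ≤ 1) :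
    ∫ ω, observedOutcome L R t₀ t₁ ω ∂(measure q)[|instrument ⁻¹' {1}] = t₁ - L := by
  have hobs : ∀ᵐ ω ∂(measure q)[|instrument ⁻¹' {1}],
      observedOutcome L R t₀ t₁ ω = potentialOutcome L t₁ ω := by
    filter_upwards [ae_cond_mem (measurable_instrument (measurableSet_singleton 1))] with ω hω
    exact observedOutcome_of_instrument_eq_one h₀ h₁ hω
  have htrue : Ber(true, false, q) {true} ≠ 0 := by
    rw [bernoulliMeasure_apply_of_mem_of_notMem q (measurableSet_singleton _) rfl (by simp),
      ENNReal.coe_ne_zero, ← NNReal.coe_ne_zero, unitInterval.coe_toNNReal]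
    exact hq
  rw [integral_congr_ae hobs, instrument_preimage_one,
    integral_potentialOutcome_cond_fst_preimage htrue hL hLt₁ (h₁.trans hR)]

lemma integral_observedOutcome_cond_instrument_zero (hq : (q : ℝ) ≠ 1) (hL : 0 ≤ L)
    (hLt₀ : L ≤ t₀) (ht₀ : t₀ ≤ 1) :
    ∫ ω, observedOutcome L R t₀ t₁ ω ∂(measure q)[|instrument ⁻¹' {0}] = t₀ - L := by
  have hobs : ∀ᵐ ω ∂(measure q)[|instrument ⁻¹' {0}],
      observedOutcome L R t₀ t₁ ω = potentialOutcome L t₀ ω := by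
    filter_upwards [ae_cond_mem (measurable_instrument (measurableSet_singleton 0))] with ω hω
    exact observedOutcome_of_instrument_eq_zero hω
  have hfalse : Ber(true, false, q) {false} ≠ 0 := by
    rw [bernoulliMeasure_apply_of_notMem_of_mem q (measurableSet_singleton _) (by simp) rfl,
      ENNReal.coe_ne_zero, ← NNReal.coe_ne_zero, unitInterval.coe_toNNReal,
      unitInterval.coe_symm_eq, sub_ne_zero]
    exact hq.symm
  rw [integral_congr_ae hobs, instrument_preimage_zero,
    integral_potentialOutcome_cond_fst_preimage hfalse hL hLt₀ ht₀]

lemma integral_sub_potentialOutcome_cond_band (hL : 0 ≤ L) (hLt₀ : L ≤ t₀) (h₀ : t₀ ≤ R)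
    (hLt₁ : L ≤ t₁) (h₁ : t₁ ≤ R) (hR : R ≤ 1) :
    ∫ ω, (potentialOutcome L t₁ ω - potentialOutcome L t₀ ω)
      ∂(measure q)[|{ω | L < ω.2 ∧ ω.2 ≤ R}] = (t₁ - t₀) / (R - L) := by
  change ∫ ω, ((Ioc L t₁).indicator 1 ω.2 - (Ioc L t₀).indicator 1 ω.2)
    ∂(measure q)[|Prod.snd ⁻¹' Ioc L R] = _
  have hint : ∀ t, Integrable ((Ioc L t).indicator (1 : ℝ → ℝ))
      ((volume.restrict (Icc 0 1))[|Ioc L R]) :=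
    fun t => (integrable_const 1).indicator measurableSet_Ioc
  rw [measure, cond_prod_snd_preimage,
    integral_fun_snd (f := fun u => (Ioc L t₁).indicator 1 u - (Ioc L t₀).indicator 1 u),
    probReal_univ, one_smul, integral_sub (hint t₁) (hint t₀),
    integral_indicator_one measurableSet_Ioc, integral_indicator_one measurableSet_Ioc,
    uniform_cond_real_Ioc hL hLt₁ h₁ hR,
    uniform_cond_real_Ioc hL hLt₀ h₀ hR, div_sub_div_same, sub_sub_sub_cancel_right]

end LateModel

theorem stmt_13_general
    (p0 p1 : ℝ) (hp0 : 0 ≤ p0) (hp01 : p0 < p1) (hp1pos : 0 < p1)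
    (q : ℝ) (hq : q ∈ Set.Ioo (0:ℝ) 1)
    (ΔY : ℝ)
    (c : ℝ) (hc : c ∈ Set.Icc (1:ℝ) (1 / p1))
    (a : ℝ) (ha : a ∈ Set.Icc (1 / c) c)
    (βtil : ℝ) (hβtil : βtil = (1 / a) * (ΔY / (p1 - p0)))
    (hβtil_bdd : βtil ∈ Set.Icc (-1 : ℝ) 1) :
    ∃ (Ω : Type) (_ : MeasurableSpace Ω) (P : Measure Ω) (_ : IsProbabilityMeasure P)
      (Z U Y0 Y1 D Y : Ω → ℝ),
      Measurable Z ∧ Measurable U ∧ Measurable Y0 ∧ Measurable Y1 ∧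
      -- (i) Z takes values in {0,1} with P(Z = 1) = q
      (∀ ω, Z ω = 0 ∨ Z ω = 1) ∧ P (Z ⁻¹' {1}) = ENNReal.ofReal q ∧
      -- (ii) Ũ is uniformly distributed on [0,1]
      Measure.map U P = volume.restrict (Set.Icc (0:ℝ) 1) ∧
      -- (iii) Z is independent of (Ỹ₀, Ỹ₁, Ũ)
      IndepFun Z (fun ω => (Y0 ω, Y1 ω, U ω)) P ∧
      -- (iv) Ỹ₀ and Ỹ₁ take values in {0,1}
      (∀ ω, Y0 ω = 0 ∨ Y0 ω = 1) ∧ (∀ ω, Y1 ω = 0 ∨ Y1 ω = 1) ∧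
      -- definitions of D̃ and Ỹ
      (∀ ω, D ω = if Z ω = 1 then (if U ω ≤ a * p1 then 1 else 0)
                  else (if U ω ≤ a * p0 then 1 else 0)) ∧
      (∀ ω, Y ω = D ω * Y1 ω + (1 - D ω) * Y0 ω) ∧
      -- (v) E[Ỹ₁ − Ỹ₀ | a·p₀ < Ũ ≤ a·p₁] = β̃
      (∫ ω, (Y1 ω - Y0 ω)
          ∂(ProbabilityTheory.cond P {ω | a * p0 < U ω ∧ U ω ≤ a * p1})) = βtil ∧
      -- (vi) E[Ỹ | Z = 1] − E[Ỹ | Z = 0] = ΔY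
      (∫ ω, Y ω ∂(ProbabilityTheory.cond P (Z ⁻¹' {1})))
          - (∫ ω, Y ω ∂(ProbabilityTheory.cond P (Z ⁻¹' {0}))) = ΔY := by
  obtain ⟨hq0, hq1⟩ := hq
  obtain ⟨hc1, hcp⟩ := hc
  obtain ⟨hca, hac⟩ := ha
  obtain ⟨hβlo, hβhi⟩ := hβtil_bdd
  have ha0 : 0 < a := (one_div_pos.mpr (by linarith)).trans_le hca
  set L := a * p0
  set R := a * p1
  have hL : 0 ≤ L := by positivity
  have hLR : 0 < R - L := sub_pos.mpr (mul_lt_mul_of_pos_left hp01 ha0)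
  have hR : R ≤ 1 := (le_div_iff₀ hp1pos).mp (hac.trans hcp)
  have hΔY : ΔY = βtil * (R - L) := by
    rw [hβtil]; field_simp [R, L, (sub_pos.mpr hp01).ne']; ring
  have hband : ∀ s, 0 ≤ s → s ≤ 1 → L ≤ L + s * (R - L) ∧ L + s * (R - L) ≤ R := fun s h0 h1 =>
    ⟨by nlinarith, by nlinarith⟩
  set t₁ := L + max βtil 0 * (R - L)
  set t₀ := L + max (-βtil) 0 * (R - L)
  obtain ⟨hLt₁, ht₁R⟩ := hband _ (le_max_right _ _) (max_le hβhi zero_le_one)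
  obtain ⟨hLt₀, ht₀R⟩ := hband _ (le_max_right _ _) (max_le (neg_le.mpr hβlo) zero_le_one)
  have ht : t₁ - t₀ = ΔY := by
    rw [hΔY]; linear_combination (R - L) * max_zero_sub_max_neg_zero_eq_self βtil
  refine ⟨Bool × ℝ, _, LateModel.measure ⟨q, hq0.le, hq1.le⟩, inferInstance,
    LateModel.instrument, Prod.snd, LateModel.potentialOutcome L t₀,
    LateModel.potentialOutcome L t₁, LateModel.treatment L R,
    LateModel.observedOutcome L R t₀ t₁, LateModel.measurable_instrument, measurable_snd,
    LateModel.measurable_potentialOutcome, LateModel.measurable_potentialOutcome,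
    LateModel.instrument_eq_zero_or_one, LateModel.measure_instrument_preimage_one,
    LateModel.map_snd_measure, LateModel.indepFun_instrument,
    LateModel.potentialOutcome_eq_zero_or_one, LateModel.potentialOutcome_eq_zero_or_one,
    fun _ => rfl, fun _ => rfl, ?_, ?_⟩
  · rw [LateModel.integral_sub_potentialOutcome_cond_band hL hLt₀ ht₀R hLt₁ ht₁R hR, ht, hΔY,
      mul_div_cancel_right₀ _ hLR.ne']
  · rw [LateModel.integral_observedOutcome_cond_instrument_one hq0.ne' hL ht₀R hLt₁ ht₁R hR,
      LateModel.integral_observedOutcome_cond_instrument_zero hq1.ne hL hLt₀ (ht₀R.trans hR)]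
    linarith

/-- **Proposition F.2, sharp identified set for the LATE, binary outcome.**
Given `0 ≤ p₀ < p₁ ≤ 1` with `p₁ > 0`, `q ∈ (0,1)`, `ΔY ∈ ℝ`, `c ∈ [1, 1/p₁]`,
`a ∈ [1/c, c]` and `β̃ = (1/a)·ΔY/(p₁ − p₀)` with `−1 ≤ β̃ ≤ 1`, there exists a probability
space carrying `Z, Ũ, Ỹ₀, Ỹ₁` satisfying conditions (i)–(vi). -/
theorem stmt_13
    (p0 p1 : ℝ) (hp0 : 0 ≤ p0) (hp01 : p0 < p1) (hp1 : p1 ≤ 1) (hp1pos : 0 < p1)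
    (q : ℝ) (hq : q ∈ Set.Ioo (0:ℝ) 1)
    (ΔY : ℝ)
    (c : ℝ) (hc : c ∈ Set.Icc (1:ℝ) (1 / p1))
    (a : ℝ) (ha : a ∈ Set.Icc (1 / c) c)
    (βtil : ℝ) (hβtil : βtil = (1 / a) * (ΔY / (p1 - p0)))
    (hβtil_bdd : βtil ∈ Set.Icc (-1 : ℝ) 1) :
    ∃ (Ω : Type) (_ : MeasurableSpace Ω) (P : Measure Ω) (_ : IsProbabilityMeasure P)
      (Z U Y0 Y1 D Y : Ω → ℝ),
      Measurable Z ∧ Measurable U ∧ Measurable Y0 ∧ Measurable Y1 ∧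
      -- (i) Z takes values in {0,1} with P(Z = 1) = q
      (∀ ω, Z ω = 0 ∨ Z ω = 1) ∧ P (Z ⁻¹' {1}) = ENNReal.ofReal q ∧
      -- (ii) Ũ is uniformly distributed on [0,1]
      Measure.map U P = volume.restrict (Set.Icc (0:ℝ) 1) ∧
      -- (iii) Z is independent of (Ỹ₀, Ỹ₁, Ũ)
      IndepFun Z (fun ω => (Y0 ω, Y1 ω, U ω)) P ∧
      -- (iv) Ỹ₀ and Ỹ₁ take values in {0,1}
      (∀ ω, Y0 ω = 0 ∨ Y0 ω = 1) ∧ (∀ ω, Y1 ω = 0 ∨ Y1 ω = 1) ∧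
      -- definitions of D̃ and Ỹ
      (∀ ω, D ω = if Z ω = 1 then (if U ω ≤ a * p1 then 1 else 0)
                  else (if U ω ≤ a * p0 then 1 else 0)) ∧
      (∀ ω, Y ω = D ω * Y1 ω + (1 - D ω) * Y0 ω) ∧
      -- (v) E[Ỹ₁ − Ỹ₀ | a·p₀ < Ũ ≤ a·p₁] = β̃
      (∫ ω, (Y1 ω - Y0 ω)
          ∂(ProbabilityTheory.cond P {ω | a * p0 < U ω ∧ U ω ≤ a * p1})) = βtil ∧
      -- (vi) E[Ỹ | Z = 1] − E[Ỹ | Z = 0] = ΔY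
      (∫ ω, Y ω ∂(ProbabilityTheory.cond P (Z ⁻¹' {1})))
          - (∫ ω, Y ω ∂(ProbabilityTheory.cond P (Z ⁻¹' {0}))) = ΔY :=
  stmt_13_general p0 p1 hp0 hp01 hp1pos q hq ΔY c hc a ha βtil hβtil hβtil_bdd
end

section
/- Naive IV covariance identity. Under the generalized selection model, assume in addition that Z is integrable. Then Cov(Z, Y) = ∫₀¹ E[(Z − E[Z])·1{u ≤ P_D(Z)}] · m(u) du; that is, the covariance of the instrument with the observed outcome equals the weighted integral of the conditional-mean treatment effect m with weights u ↦ E[(Z − E[Z])·1{u ≤ P_D(Z)}]. -/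
open MeasureTheory ProbabilityTheory

/-!
Write `c = E[Z]` and `Y = Y₀ + D (Y₁ - Y₀)`. The `Y₀` part contributes `E[(Z - c) Y₀] = 0` by
independence. Since `Z` is independent of `(Y₁ - Y₀, U)`, the remaining term
`E[(Z - c) 1{U ≤ P_D(Z)} (Y₁ - Y₀)]` is computed by freezing `Z = z`; for fixed `z` the inner
expectation `E[1{U ≤ P_D(z)} (Y₁ - Y₀)]` is `∫₀¹ 1{u ≤ P_D(z)} m(u) du` by the defining property
of `m`. Exchanging the `z`- and `u`-integrals (Fubini, the indicator being bounded) gives the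
claimed weighted integral of `m`.
-/

section Fubini

variable {α β : Type*} [MeasurableSpace α] [MeasurableSpace β] {μ : Measure α} {ν : Measure β}
  {f : α → ℝ} {g : β → ℝ} {k : α × β → ℝ} {C : ℝ}

theorem MeasureTheory.Integrable.mul_bdd_mul_prod [SFinite ν] (hf : Integrable f μ)
    (hg : Integrable g ν) (hk : AEStronglyMeasurable k (μ.prod ν)) (hkC : ∀ p, ‖k p‖ ≤ C) :
    Integrable (fun p => f p.1 * (k p * g p.2)) (μ.prod ν) :=
  ((hf.mul_prod hg).bdd_mul hk (ae_of_all _ hkC)).congr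
    (ae_of_all _ fun _ => mul_left_comm _ _ _)

theorem integral_mul_integral_bdd_mul_swap [SFinite μ] [SFinite ν] (hf : Integrable f μ)
    (hg : Integrable g ν) (hk : AEStronglyMeasurable k (μ.prod ν)) (hkC : ∀ p, ‖k p‖ ≤ C) :
    ∫ x, f x * ∫ y, k (x, y) * g y ∂ν ∂μ = ∫ y, (∫ x, f x * k (x, y) ∂μ) * g y ∂ν := by
  have hswap := integral_integral_swap (f := fun x y => f x * (k (x, y) * g y))
    (hf.mul_bdd_mul_prod hg hk hkC)
  simp only [integral_const_mul] at hswap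
  rw [hswap]
  congr 1 with y
  rw [← integral_mul_const]
  exact integral_congr_ae (ae_of_all _ fun x => by simp only [mul_assoc])

end Fubini

namespace ProbabilityTheory

variable {Ω α β : Type*} [MeasurableSpace Ω] [MeasurableSpace α] [MeasurableSpace β]
  {P : Measure Ω} {X : Ω → α} {W : Ω → β} {g : α → β → ℝ}

theorem IndepFun.integrable_comp [IsFiniteMeasure P] (hXW : IndepFun X W P)
    (hX : AEMeasurable X P) (hW : AEMeasurable W P)
    (hg : Integrable (Function.uncurry g) ((P.map X).prod (P.map W))) :
    Integrable (fun ω => g (X ω) (W ω)) P := by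
  rw [← hXW.map_prod_eq_prod_map_map hX hW] at hg
  exact hg.comp_aemeasurable (hX.prodMk hW)

theorem IndepFun.integral_comp_eq_integral_integral_comp [IsFiniteMeasure P]
    (hXW : IndepFun X W P) (hX : AEMeasurable X P) (hW : AEMeasurable W P)
    (hg : Integrable (Function.uncurry g) ((P.map X).prod (P.map W))) :
    ∫ ω, g (X ω) (W ω) ∂P = ∫ x, ∫ ω, g x (W ω) ∂P ∂(P.map X) := by
  have hmap := hXW.map_prod_eq_prod_map_map hX hW
  have hinner : ∀ᵐ x ∂(P.map X), ∫ w, g x w ∂(P.map W) = ∫ ω, g x (W ω) ∂P := by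
    filter_upwards [hg.prod_right_ae] with x hx
    exact integral_map hW hx.1
  rw [integral_congr_ae (hinner.mono fun _ => Eq.symm), integral_integral hg, ← hmap,
    integral_map (hX.prodMk hW) (hmap ▸ hg.1)]

theorem IndepFun.integral_sub_integral_mul_eq_zero [IsProbabilityMeasure P] {X Y : Ω → ℝ}
    (hXY : IndepFun X Y P) (hX : Integrable X P) (hY : AEStronglyMeasurable Y P) :
    ∫ ω, (X ω - ∫ ω', X ω' ∂P) * Y ω ∂P = 0 := by
  have hcentered := (hXY.comp (measurable_id.sub_const (∫ ω', X ω' ∂P)) measurable_id)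
    |>.integral_mul_eq_mul_integral (hX.sub (integrable_const _)).1 hY
  simp only [Function.comp_def, id] at hcentered
  rw [← Pi.mul_def (f := fun ω => X ω - _), hcentered, integral_sub hX (integrable_const _)]
  simp

end ProbabilityTheory

section SelectionModel

variable {Ω : Type*} [MeasurableSpace Ω] {P : Measure Ω} {U Δ : Ω → ℝ} {m : ℝ → ℝ} {PD : ℝ → ℝ}

theorem measurable_ite_snd_le_comp_fst (hPD : Measurable PD) :
    Measurable fun p : ℝ × ℝ => if p.2 ≤ PD p.1 then (1 : ℝ) else 0 :=
  Measurable.ite (measurableSet_le measurable_snd (hPD.comp measurable_fst))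
    measurable_const measurable_const

theorem norm_ite_le_one (p : Prop) [Decidable p] : ‖if p then (1 : ℝ) else 0‖ ≤ 1 := by
  split_ifs <;> simp

theorem integral_ite_le_mul_eq_setIntegral {s : Set ℝ}
    (hm : ∀ A : Set ℝ, MeasurableSet A →
      ∫ u in A ∩ s, m u = ∫ ω, Δ ω * A.indicator 1 (U ω) ∂P) (t : ℝ) :
    ∫ ω, (if U ω ≤ t then 1 else 0) * Δ ω ∂P = ∫ u in s, (if u ≤ t then 1 else 0) * m u := by
  have hind : ∀ u, (if u ≤ t then 1 else 0) * m u = (Set.Iic t).indicator m u := fun u => by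
    by_cases hu : u ≤ t <;> simp [hu]
  simp only [hind, setIntegral_indicator measurableSet_Iic, Set.inter_comm s,
    hm _ measurableSet_Iic]
  congr 1 with ω
  by_cases hω : U ω ≤ t <;> simp [hω]

variable [IsFiniteMeasure P] {Z : Ω → ℝ}

theorem integrable_map_sub_const (c : ℝ) (hZ : Integrable Z P) :
    Integrable (fun z => z - c) (P.map Z) :=
  ((integrable_map_measure aestronglyMeasurable_id hZ.aemeasurable).2 hZ).sub (integrable_const c)

theorem integrable_uncurry_sub_mul_ite_le_mul (c : ℝ) (hZ : Integrable Z P) (hΔ : Integrable Δ P)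
    (hU : AEMeasurable U P) (hPD : Measurable PD) :
    Integrable
      (Function.uncurry fun z (w : ℝ × ℝ) => (z - c) * ((if w.2 ≤ PD z then 1 else 0) * w.1))
      ((P.map Z).prod (P.map fun ω => (Δ ω, U ω))) :=
  Integrable.mul_bdd_mul_prod
    (integrable_map_sub_const c hZ)
    ((integrable_map_measure measurable_fst.aestronglyMeasurable
      (hΔ.aemeasurable.prodMk hU)).2 hΔ)
    ((measurable_ite_snd_le_comp_fst hPD).comp
      (measurable_fst.prodMk measurable_snd.snd)).aestronglyMeasurable
    fun _ => norm_ite_le_one _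

theorem integral_sub_mul_ite_le_mul_eq (c : ℝ) {s : Set ℝ}
    (hindep : IndepFun Z (fun ω => (Δ ω, U ω)) P) (hZ : Integrable Z P) (hΔ : Integrable Δ P)
    (hU : AEMeasurable U P) (hPD : Measurable PD) (hms : IntegrableOn m s)
    (hm : ∀ A : Set ℝ, MeasurableSet A →
      ∫ u in A ∩ s, m u = ∫ ω, Δ ω * A.indicator 1 (U ω) ∂P) :
    ∫ ω, (Z ω - c) * ((if U ω ≤ PD (Z ω) then 1 else 0) * Δ ω) ∂P
      = ∫ u in s, (∫ ω, (Z ω - c) * (if u ≤ PD (Z ω) then 1 else 0) ∂P) * m u := by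
  rw [hindep.integral_comp_eq_integral_integral_comp hZ.aemeasurable
    (hΔ.aemeasurable.prodMk hU) (integrable_uncurry_sub_mul_ite_le_mul c hZ hΔ hU hPD)]
  simp only [integral_const_mul, integral_ite_le_mul_eq_setIntegral hm]
  rw [integral_mul_integral_bdd_mul_swap (k := fun p => if p.2 ≤ PD p.1 then 1 else 0)
    (integrable_map_sub_const c hZ) hms
    (measurable_ite_snd_le_comp_fst hPD).aestronglyMeasurable fun _ => norm_ite_le_one _]
  congr 1 with u
  congr 1
  exact integral_map hZ.aemeasurable
    ((measurable_id.sub_const c).mul ((measurable_ite_snd_le_comp_fst hPD).comp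
      (measurable_id.prodMk measurable_const))).aestronglyMeasurable

end SelectionModel

theorem stmt_16_general
    {Ω : Type*} [MeasurableSpace Ω] (P : Measure Ω) [IsProbabilityMeasure P]
    (Z U Y0 Y1 : Ω → ℝ)
    (hUm : Measurable U)
    (hZint : Integrable Z P)
    (hindep : IndepFun Z (fun ω => (Y0 ω, Y1 ω, U ω)) P)
    (hY0int : Integrable Y0 P) (hY1int : Integrable Y1 P)
    (PD : ℝ → ℝ) (hPDm : Measurable PD)
    (D : Ω → ℝ) (hD : ∀ ω, D ω = if U ω ≤ PD (Z ω) then 1 else 0)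
    (Y : Ω → ℝ) (hY : ∀ ω, Y ω = D ω * Y1 ω + (1 - D ω) * Y0 ω)
    (m : ℝ → ℝ) (hmint : IntegrableOn m (Set.Icc 0 1) volume)
    (hmcond : ∀ A : Set ℝ, MeasurableSet A →
      ∫ u in A ∩ Set.Icc (0:ℝ) 1, m u
        = ∫ ω, (Y1 ω - Y0 ω) * A.indicator 1 (U ω) ∂P) :
    ∫ ω, (Z ω - ∫ ω', Z ω' ∂P) * Y ω ∂P
      = ∫ u in (0:ℝ)..1,
          (∫ ω, (Z ω - ∫ ω', Z ω' ∂P) * (if u ≤ PD (Z ω) then 1 else 0) ∂P) * m u := by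
  set c := ∫ ω', Z ω' ∂P
  have hΔ := hY1int.sub hY0int
  have hZΔU : IndepFun Z (fun ω => (Y1 ω - Y0 ω, U ω)) P :=
    hindep.comp measurable_id ((measurable_snd.fst.sub measurable_fst).prodMk measurable_snd.snd)
  have hZY0 : IndepFun Z Y0 P := hindep.comp measurable_id measurable_fst
  have hsplit : ∀ ω, (Z ω - c) * Y ω = (Z ω - c) * Y0 ω
      + (Z ω - c) * ((if U ω ≤ PD (Z ω) then 1 else 0) * (Y1 ω - Y0 ω)) := fun ω => by
    rw [hY, hD]; ring
  have hY0part : Integrable (fun ω => (Z ω - c) * Y0 ω) P :=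
    (hZY0.comp (measurable_id.sub_const c) measurable_id).integrable_mul
      (hZint.sub (integrable_const c)) hY0int
  have hΔpart : Integrable
      (fun ω => (Z ω - c) * ((if U ω ≤ PD (Z ω) then 1 else 0) * (Y1 ω - Y0 ω))) P :=
    hZΔU.integrable_comp hZint.aemeasurable (hΔ.aemeasurable.prodMk hUm.aemeasurable)
      (integrable_uncurry_sub_mul_ite_le_mul c hZint hΔ hUm.aemeasurable hPDm)
  rw [integral_congr_ae (ae_of_all _ hsplit), integral_add hY0part hΔpart,
    hZY0.integral_sub_integral_mul_eq_zero hZint hY0int.1, zero_add,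
    integral_sub_mul_ite_le_mul_eq c hZΔU hZint hΔ hUm.aemeasurable hPDm hmint hmcond,
    intervalIntegral.integral_of_le zero_le_one, integral_Icc_eq_integral_Ioc]

/-- **Naive IV covariance identity.**
Under the generalized selection model with `Z` integrable,
`Cov(Z, Y) = ∫₀¹ E[(Z − E[Z])·1{u ≤ P_D(Z)}]·m(u) du`, where `m` is the conditional-mean
version of `Y₁ − Y₀` given `U`. -/
theorem stmt_16
    {Ω : Type*} [MeasurableSpace Ω] (P : Measure Ω) [IsProbabilityMeasure P]
    (Z U Y0 Y1 : Ω → ℝ)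
    (hZm : Measurable Z) (hUm : Measurable U) (hY0m : Measurable Y0) (hY1m : Measurable Y1)
    (hZint : Integrable Z P)
    (hindep : IndepFun Z (fun ω => (Y0 ω, Y1 ω, U ω)) P)
    (hUnif : Measure.map U P = volume.restrict (Set.Icc (0:ℝ) 1))
    (hY0int : Integrable Y0 P) (hY1int : Integrable Y1 P)
    (PD : ℝ → ℝ) (hPDm : Measurable PD) (hPD01 : ∀ z, PD z ∈ Set.Icc (0:ℝ) 1)
    (D : Ω → ℝ) (hD : ∀ ω, D ω = if U ω ≤ PD (Z ω) then 1 else 0)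
    (Y : Ω → ℝ) (hY : ∀ ω, Y ω = D ω * Y1 ω + (1 - D ω) * Y0 ω)
    (m : ℝ → ℝ) (hmm : Measurable m) (hmint : IntegrableOn m (Set.Icc 0 1) volume)
    (hmcond : ∀ A : Set ℝ, MeasurableSet A →
      ∫ u in A ∩ Set.Icc (0:ℝ) 1, m u
        = ∫ ω, (Y1 ω - Y0 ω) * A.indicator 1 (U ω) ∂P) :
    ∫ ω, (Z ω - ∫ ω', Z ω' ∂P) * Y ω ∂P
      = ∫ u in (0:ℝ)..1,
          (∫ ω, (Z ω - ∫ ω', Z ω' ∂P) * (if u ≤ PD (Z ω) then 1 else 0) ∂P) * m u :=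
  stmt_16_general P Z U Y0 Y1 hUm hZint hindep hY0int hY1int PD hPDm D hD Y hY m hmint hmcond
end
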